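/- arXiv:1905.13349 — 6 statements merged into one kernel-verified Lean document; each statement's English description precedes it below -/
import Mathlib

section
/- Fix a ∈ (0, 1/2), p ∈ ℕ with p ≥ 1, and λ ∈ {0, 1, 2}. Define R_λ(p, m, x) = Σ_{j=0}^{m−1} j^λ cos((2pj+1)x) and S_λ(p, m, x) = Σ_{j=0}^{m−1} j^λ sin((2pj+1)x). Then there exists C > 0 such that for all m ∈ ℕ with m ≥ 1 and all x ∈ [m^{−a}, π/p − m^{−a}], one has |R_λ(p, m, x)| ≤ C m^{λ+a} and |S_λ(p, m, x)| ≤ C m^{λ+a}. -/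
/-!
`R + iS` is the weighted exponential sum `∑ j^λ e^{i(2pj+1)x}`. Its unweighted partial sums are
geometric with ratio `e^{2ipx}`, hence bounded by `1 / sin (p x)`, and Abel summation against the
monotone weights `j^λ` costs a factor `2 m^λ`. On `[m^{-ν}, π/p - m^{-ν}]` the point `p x` stays
`m^{-ν}` away from `0` and `π`, so Jordan's inequality gives `sin (p x) ≥ (2/π) m^{-ν}`.
-/

open Real Set Finset

theorem norm_sum_range_smul_le_of_monotone {E : Type*} [SeminormedAddCommGroup E]
    [NormedSpace ℝ E] {w : ℕ → ℝ} (hw : Monotone w) (hw0 : 0 ≤ w 0) {f : ℕ → E} {B : ℝ}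
    (hB : ∀ k, ‖∑ j ∈ range k, f j‖ ≤ B) (m : ℕ) :
    ‖∑ j ∈ range m, w j • f j‖ ≤ 2 * w (m - 1) * B := by
  have hB0 : 0 ≤ B := (norm_nonneg _).trans (hB 0)
  have hwm : 0 ≤ w (m - 1) := hw0.trans (hw (Nat.zero_le _))
  have hincr : ∑ i ∈ range (m - 1), ‖(w (i + 1) - w i) • ∑ j ∈ range (i + 1), f j‖
      ≤ (w (m - 1) - w 0) * B := by
    rw [← sum_range_sub w, sum_mul]
    refine sum_le_sum fun i _ => ?_
    rw [norm_smul, Real.norm_of_nonneg (sub_nonneg.2 (hw i.le_succ))]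
    exact mul_le_mul_of_nonneg_left (hB _) (sub_nonneg.2 (hw i.le_succ))
  calc ‖∑ j ∈ range m, w j • f j‖
      ≤ ‖w (m - 1) • ∑ j ∈ range m, f j‖
        + ∑ i ∈ range (m - 1), ‖(w (i + 1) - w i) • ∑ j ∈ range (i + 1), f j‖ := by
        rw [sum_range_by_parts]
        exact (norm_sub_le _ _).trans (add_le_add_right (norm_sum_le _ _) _)
    _ ≤ w (m - 1) * B + (w (m - 1) - w 0) * B := by
        rw [norm_smul, Real.norm_of_nonneg hwm]
        exact add_le_add (mul_le_mul_of_nonneg_left (hB m) hwm) hincr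
    _ ≤ 2 * w (m - 1) * B := by nlinarith

theorem Complex.norm_sum_exp_arithProg_mul_I_le {a d : ℝ} (hd : Real.sin (d / 2) ≠ 0)
    (k : ℕ) : ‖∑ j ∈ range k, exp (↑(a + j * d) * I)‖ ≤ 1 / |Real.sin (d / 2)| := by
  set z := exp (d * I)
  have hz : ‖z - 1‖ = 2 * |Real.sin (d / 2)| := by
    rw [show z = exp (I * d) by rw [mul_comm], norm_exp_I_mul_ofReal_sub_one, norm_mul,
      Real.norm_two, Real.norm_eq_abs]
  have hz1 : z ≠ 1 := fun h => by simp [h, hd] at hz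
  have hterm : ∀ j : ℕ, exp (↑(a + j * d) * I) = exp (a * I) * z ^ j := fun j => by
    rw [← exp_nat_mul, ← exp_add]; push_cast; ring_nf
  calc ‖∑ j ∈ range k, exp (↑(a + j * d) * I)‖
      = ‖z ^ k - 1‖ / ‖z - 1‖ := by
        simp_rw [hterm, ← mul_sum, geom_sum_eq hz1, norm_mul, norm_exp_ofReal_mul_I, one_mul,
          norm_div]
    _ ≤ 2 / (2 * |Real.sin (d / 2)|) := by
        rw [hz]
        gcongr
        calc ‖z ^ k - 1‖ ≤ ‖z ^ k‖ + ‖(1 : ℂ)‖ := norm_sub_le _ _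
          _ = 2 := by rw [norm_pow, norm_exp_ofReal_mul_I]; norm_num
    _ = 1 / |Real.sin (d / 2)| := by field_simp

theorem two_div_pi_mul_le_sin {t y : ℝ} (ht : 0 ≤ t) (hty : t ≤ y) (hyt : y ≤ π - t) :
    2 / π * t ≤ sin y := by
  rcases le_total y (π / 2) with hy | hy
  · calc 2 / π * t ≤ 2 / π * y := by gcongr
      _ ≤ sin y := mul_le_sin (by linarith) hy
  · calc 2 / π * t ≤ 2 / π * (π - y) := by gcongr; linarith
      _ ≤ sin (π - y) := mul_le_sin (by linarith) (by linarith)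
      _ = sin y := sin_pi_sub y

theorem two_div_pi_mul_le_sin_natCast_mul {p : ℕ} (hp : 1 ≤ p) {t x : ℝ} (ht : 0 ≤ t)
    (hx : x ∈ Icc t (π / p - t)) : 2 / π * t ≤ sin (p * x) := by
  have hp1 : (1 : ℝ) ≤ p := by exact_mod_cast hp
  have hpx : p * x ≤ π - p * t := by
    rw [← mul_div_cancel₀ π (by positivity : (p : ℝ) ≠ 0), ← mul_sub]
    exact mul_le_mul_of_nonneg_left hx.2 (by positivity)
  exact two_div_pi_mul_le_sin ht (by nlinarith [hx.1]) (by nlinarith)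

theorem norm_sum_pow_smul_exp_le (p lam m : ℕ) {x : ℝ} (hs : 0 < sin (p * x)) :
    ‖∑ j ∈ range m, (j : ℝ) ^ lam • Complex.exp (↑((2 * p * j + 1) * x) * Complex.I)‖
      ≤ 2 * (m : ℝ) ^ lam / sin (p * x) := by
  have hw : Monotone fun j : ℕ => (j : ℝ) ^ lam := fun i j hij => by
    dsimp only; gcongr
  have hhalf : 2 * (p : ℝ) * x / 2 = p * x := by ring
  have hterm (j : ℕ) : (2 * p * j + 1) * x = x + j * (2 * p * x) := by ring
  calc _ ≤ 2 * ((m - 1 : ℕ) : ℝ) ^ lam * (1 / |sin (p * x)|) := by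
        refine norm_sum_range_smul_le_of_monotone hw (by positivity) (fun k => ?_) m
        simp_rw [hterm, ← hhalf]
        exact Complex.norm_sum_exp_arithProg_mul_I_le (hhalf ▸ hs.ne') k
    _ ≤ 2 * (m : ℝ) ^ lam / sin (p * x) := by
        rw [abs_of_pos hs, mul_one_div]
        gcongr
        exact_mod_cast Nat.sub_le m 1

theorem trig_sum_bounds_R_S_general
    (ν : ℝ) (p : ℕ) (hp : 1 ≤ p)
    (lam : ℕ) :
    ∃ C > 0, ∀ m : ℕ, 1 ≤ m →
      ∀ x ∈ Set.Icc ((m : ℝ) ^ (-ν)) (π / p - (m : ℝ) ^ (-ν)),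
        |∑ j ∈ Finset.range m, (j : ℝ) ^ lam * Real.cos ((2 * p * j + 1) * x)|
            ≤ C * (m : ℝ) ^ ((lam : ℝ) + ν) ∧
        |∑ j ∈ Finset.range m, (j : ℝ) ^ lam * Real.sin ((2 * p * j + 1) * x)|
            ≤ C * (m : ℝ) ^ ((lam : ℝ) + ν) := by
  refine ⟨π, pi_pos, fun m hm x hx => ?_⟩
  have hm0 : (0 : ℝ) < m := by exact_mod_cast hm
  have ht : 0 < (m : ℝ) ^ (-ν) := rpow_pos_of_pos hm0 _
  have hsin := two_div_pi_mul_le_sin_natCast_mul hp ht.le hx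
  have hsin0 : 0 < sin (p * x) := (by positivity : 0 < 2 / π * (m : ℝ) ^ (-ν)).trans_le hsin
  have hE := calc
    ‖∑ j ∈ range m, (j : ℝ) ^ lam • Complex.exp (↑((2 * p * j + 1) * x) * Complex.I)‖
        ≤ 2 * (m : ℝ) ^ lam / sin (p * x) := norm_sum_pow_smul_exp_le p lam m hsin0
    _ ≤ 2 * (m : ℝ) ^ lam / (2 / π * (m : ℝ) ^ (-ν)) := by gcongr
    _ = π * (m : ℝ) ^ ((lam : ℝ) + ν) := by
        rw [rpow_add hm0, rpow_natCast, rpow_neg hm0.le]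
        field_simp
  constructor
  · simpa only [Complex.re_sum, Complex.smul_re, Complex.exp_ofReal_mul_I_re, smul_eq_mul]
      using (Complex.abs_re_le_norm _).trans hE
  · simpa only [Complex.im_sum, Complex.smul_im, Complex.exp_ofReal_mul_I_im, smul_eq_mul]
      using (Complex.abs_im_le_norm _).trans hE

/-- Bounds `|R_λ(p,m,x)| ≤ C m^(λ+a)` and `|S_λ(p,m,x)| ≤ C m^(λ+a)` for the sums
`R_λ(p,m,x) = Σ_{j<m} j^λ cos((2pj+1)x)`, `S_λ(p,m,x) = Σ_{j<m} j^λ sin((2pj+1)x)`,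
uniformly for `x ∈ [m^(-a), π/p - m^(-a)]`. -/
theorem trig_sum_bounds_R_S
    (ν : ℝ) (hν : ν ∈ Set.Ioo (0 : ℝ) (1 / 2)) (p : ℕ) (hp : 1 ≤ p)
    (lam : ℕ) (hlam : lam ≤ 2) :
    ∃ C > 0, ∀ m : ℕ, 1 ≤ m →
      ∀ x ∈ Set.Icc ((m : ℝ) ^ (-ν)) (π / p - (m : ℝ) ^ (-ν)),
        |∑ j ∈ Finset.range m, (j : ℝ) ^ lam * Real.cos ((2 * p * j + 1) * x)|
            ≤ C * (m : ℝ) ^ ((lam : ℝ) + ν) ∧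
        |∑ j ∈ Finset.range m, (j : ℝ) ^ lam * Real.sin ((2 * p * j + 1) * x)|
            ≤ C * (m : ℝ) ^ ((lam : ℝ) + ν) :=
  trig_sum_bounds_R_S_general ν p hp lam
end

section
/- Fix ℓ ∈ ℕ with ℓ ≥ 1 and a ∈ (0, 1/5). For n ∈ ℕ write n = 2ℓm + r with m ∈ ℕ and r ∈ {−1, 0, …, 2ℓ−2}, and define A_n(x) = Σ_{j=0}^{m−1} Σ_{k=0}^{ℓ−1} (cos((2ℓj+k)x) + cos((2ℓj+ℓ+k)x))² + Σ_{j=2ℓm}^{n} cos²(jx). Let E_n = [0, π/ℓ] \ ([0, n^{−a}] ∪ [π/(2ℓ) − n^{−a}, π/(2ℓ) + n^{−a}] ∪ [π/ℓ − n^{−a}, π/ℓ]). Then there exist C > 0 and N such that for all n ≥ N and all x ∈ E_n, |A_n(x) − n cos²(ℓx/2)| ≤ C n^{a}. -/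
open Real Set


lemma pair_sq (A B x : ℝ) :
    (Real.cos (A * x) + Real.cos ((A + B) * x)) ^ 2
      = 2 * Real.cos (B * x / 2) ^ 2 * (1 + Real.cos ((2 * A + B) * x)) := by
  have h1 : Real.cos (A * x) + Real.cos ((A + B) * x)
      = 2 * Real.cos ((2 * A + B) * x / 2) * Real.cos (B * x / 2) := by
    rw [Real.cos_add_cos,
      show (A * x + (A + B) * x) / 2 = (2 * A + B) * x / 2 by ring,
      show (A * x - (A + B) * x) / 2 = -(B * x / 2) by ring, Real.cos_neg]
  have h2 : Real.cos ((2 * A + B) * x / 2) ^ 2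
      = 1 / 2 + Real.cos ((2 * A + B) * x) / 2 := by
    rw [Real.cos_sq, show 2 * ((2 * A + B) * x / 2) = (2 * A + B) * x by ring]
  calc (Real.cos (A * x) + Real.cos ((A + B) * x)) ^ 2
      = 4 * Real.cos ((2 * A + B) * x / 2) ^ 2 * Real.cos (B * x / 2) ^ 2 := by
        rw [h1]; ring
    _ = 4 * (1 / 2 + Real.cos ((2 * A + B) * x) / 2) * Real.cos (B * x / 2) ^ 2 := by
        rw [h2]
    _ = _ := by ring

lemma dirichlet_bound (a d : ℝ) (m : ℕ) (hd : Real.sin (d / 2) ≠ 0) :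
    |∑ j ∈ Finset.range m, Real.cos (a + j * d)| ≤ 1 / |Real.sin (d / 2)| := by
  have key : Real.sin (d / 2) * ∑ j ∈ Finset.range m, Real.cos (a + j * d)
      = (Real.sin (a + m * d - d / 2) - Real.sin (a - d / 2)) / 2 := by
    rw [Finset.mul_sum]
    have hterm : ∀ j ∈ Finset.range m, Real.sin (d / 2) * Real.cos (a + j * d)
        = ((fun j : ℕ => Real.sin (a + j * d - d / 2)) (j + 1)
            - (fun j : ℕ => Real.sin (a + j * d - d / 2)) j) / 2 := by
      intro j _
      simp only
      rw [Real.sin_sub_sin,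
        show (a + (↑(j + 1) : ℝ) * d - d / 2 - (a + j * d - d / 2)) / 2 = d / 2 by
          push_cast; ring,
        show (a + (↑(j + 1) : ℝ) * d - d / 2 + (a + j * d - d / 2)) / 2 = a + j * d by
          push_cast; ring]
      ring
    rw [Finset.sum_congr rfl hterm, ← Finset.sum_div,
      Finset.sum_range_sub (fun j : ℕ => Real.sin (a + j * d - d / 2)) m]
    simp
  have h2 : |∑ j ∈ Finset.range m, Real.cos (a + j * d)| * |Real.sin (d / 2)| ≤ 1 := by
    rw [mul_comm, ← abs_mul, key, abs_div]
    have h3 : |Real.sin (a + m * d - d / 2) - Real.sin (a - d / 2)| ≤ 2 :=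
      calc |Real.sin (a + m * d - d / 2) - Real.sin (a - d / 2)|
          ≤ |Real.sin (a + m * d - d / 2)| + |Real.sin (a - d / 2)| := abs_sub _ _
        _ ≤ 1 + 1 := add_le_add (Real.abs_sin_le_one _) (Real.abs_sin_le_one _)
        _ = 2 := by norm_num
    rw [abs_of_nonneg (by norm_num : (0:ℝ) ≤ 2)]
    linarith
  have habs : 0 < |Real.sin (d / 2)| := abs_pos.mpr hd
  rw [le_div_iff₀ habs]
  exact h2

lemma sin_lb_main {δ t : ℝ} (hδ : 0 < δ) (hδ2 : δ ≤ π / 2) (h1 : δ ≤ t) (h2 : t ≤ π - δ) :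
    Real.sin δ ≤ Real.sin t := by
  rcases le_or_gt t (π / 2) with h | h
  · exact Real.strictMonoOn_sin.monotoneOn ⟨by linarith, hδ2⟩ ⟨by linarith, h⟩ h1
  · rw [← Real.sin_pi_sub t]
    exact Real.strictMonoOn_sin.monotoneOn ⟨by linarith, hδ2⟩ ⟨by linarith, by linarith⟩
      (by linarith)

lemma sin_lb_abs {δ t : ℝ} (hδ : 0 < δ) (hδ2 : δ ≤ π / 2) (h1 : δ ≤ t)
    (h2 : δ ≤ |t - π|) (h3 : t ≤ 2 * π - δ) : Real.sin δ ≤ |Real.sin t| := by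
  rcases le_or_gt t π with h | h
  · have : t ≤ π - δ := by rw [abs_sub_comm, abs_of_nonneg (by linarith)] at h2; linarith
    calc Real.sin δ ≤ Real.sin t := sin_lb_main hδ hδ2 h1 this
      _ ≤ |Real.sin t| := le_abs_self _
  · have hd : δ ≤ t - π := by rw [abs_of_pos (by linarith)] at h2; linarith
    have : |Real.sin t| = Real.sin (t - π) := by
      rw [show t = (t - π) + π by ring, Real.sin_add_pi, abs_neg,
        abs_of_nonneg (Real.sin_nonneg_of_nonneg_of_le_pi (by linarith) (by linarith))]
      ring_nf
    rw [this]
    exact sin_lb_main hδ hδ2 hd (by linarith)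

set_option maxHeartbeats 2000000 in
/-- Uniform estimate `A_n(x) = n cos²(ℓx/2) + O(n^a)` on
`E_n = [0, π/ℓ] \ ([0, n^(-a)] ∪ [π/(2ℓ) - n^(-a), π/(2ℓ) + n^(-a)] ∪ [π/ℓ - n^(-a), π/ℓ])`. -/
theorem estimate_A_pairwise_blocks
    (ℓ : ℕ) (hℓ : 1 ≤ ℓ) (ν : ℝ) (hν : ν ∈ Set.Ioo (0 : ℝ) (1 / 5)) :
    ∃ C > 0, ∃ N : ℕ, ∀ n ≥ N, ∀ m : ℕ, ∀ r : ℤ,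
      (n : ℤ) = 2 * ℓ * m + r → -1 ≤ r → r ≤ 2 * ℓ - 2 →
      ∀ x ∈ Set.Icc (0 : ℝ) (π / ℓ) \
          (Set.Icc (0 : ℝ) ((n : ℝ) ^ (-ν)) ∪
            Set.Icc (π / (2 * ℓ) - (n : ℝ) ^ (-ν)) (π / (2 * ℓ) + (n : ℝ) ^ (-ν)) ∪
            Set.Icc (π / ℓ - (n : ℝ) ^ (-ν)) (π / ℓ)),
        |(∑ j ∈ Finset.range m, ∑ k ∈ Finset.range ℓ,
              (Real.cos (((2 * ℓ * j + k : ℕ) : ℝ) * x) +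
                Real.cos (((2 * ℓ * j + ℓ + k : ℕ) : ℝ) * x)) ^ 2 +
            ∑ j ∈ Finset.Icc (2 * ℓ * m) n, Real.cos ((j : ℝ) * x) ^ 2) -
          (n : ℝ) * Real.cos (ℓ * x / 2) ^ 2|
        ≤ C * (n : ℝ) ^ ν := by
  obtain ⟨hν0, hν5⟩ := hν
  have hπ : (0:ℝ) < π := Real.pi_pos
  have hLpos : (0:ℝ) < (ℓ:ℝ) := by exact_mod_cast hℓ
  have hb0 : (0:ℝ) ≤ 4 * ℓ / π := by positivity
  obtain ⟨N0, hN0⟩ := exists_nat_ge ((4 * (ℓ:ℝ) / π) ^ (ν⁻¹))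
  refine ⟨π / 2 + 4 * ℓ, by positivity, max N0 1, fun n hn m r hnr hr1 hr2 x hx => ?_⟩
  -- basic facts about n
  have hn1 : 1 ≤ n := le_trans (le_max_right _ _) hn
  have hn1R : (1:ℝ) ≤ (n:ℝ) := by exact_mod_cast hn1
  have hn0R : (0:ℝ) < (n:ℝ) := by linarith
  set ε : ℝ := (n:ℝ) ^ (-ν) with hεdef
  have hεeq : ε = ((n:ℝ) ^ ν)⁻¹ := by rw [hεdef, Real.rpow_neg hn0R.le]
  have hεpos : 0 < ε := Real.rpow_pos_of_pos hn0R _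
  have hge1 : 1 ≤ (n:ℝ) ^ ν := Real.one_le_rpow hn1R hν0.le
  have hnν : 4 * ℓ / π ≤ (n:ℝ) ^ ν := by
    have hge : (4 * (ℓ:ℝ) / π) ^ (ν⁻¹) ≤ (n:ℝ) := by
      refine le_trans hN0 ?_
      exact_mod_cast le_trans (le_max_left N0 1) hn
    calc (4 * (ℓ:ℝ) / π) = ((4 * (ℓ:ℝ) / π) ^ (ν⁻¹)) ^ ν :=
          (Real.rpow_inv_rpow hb0 (ne_of_gt hν0)).symm
      _ ≤ (n:ℝ) ^ ν := Real.rpow_le_rpow (Real.rpow_nonneg hb0 _) hge hν0.le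
  have hεsmall : ε ≤ π / (4 * ℓ) := by
    rw [hεeq]
    rw [show π / (4 * (ℓ:ℝ)) = (4 * ℓ / π)⁻¹ by field_simp]
    exact inv_anti₀ (by positivity) hnν
  -- extract position of x
  obtain ⟨⟨hx0, hxle⟩, hxn⟩ := hx
  simp only [Set.mem_union, Set.mem_Icc, not_or] at hxn
  push_neg at hxn
  obtain ⟨⟨h1', h2'⟩, h3'⟩ := hxn
  have he1 : ε < x := h1' hx0
  have he3 : x < π / ℓ - ε := by
    by_contra h
    push_neg at h
    exact absurd hxle (not_le.mpr (h3' h))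
  have he2 : ε < |x - π / (2 * ℓ)| := by
    rcases lt_or_ge x (π / (2 * ℓ) - ε) with h | h
    · rw [abs_sub_comm, abs_of_pos (by linarith)]; linarith
    · have := h2' h
      rw [abs_of_pos (by linarith)]; linarith
  -- bound on sin(2ℓx)
  have hδpos : 0 < 2 * (ℓ:ℝ) * ε := by positivity
  have hδhalf : 2 * (ℓ:ℝ) * ε ≤ π / 2 := by
    have : 2 * (ℓ:ℝ) * ε ≤ 2 * ℓ * (π / (4 * ℓ)) := by nlinarith
    calc 2 * (ℓ:ℝ) * ε ≤ 2 * ℓ * (π / (4 * ℓ)) := this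
      _ = π / 2 := by field_simp; ring
  have hsinLB : 4 * (ℓ:ℝ) / π * ε ≤ |Real.sin (2 * ℓ * x)| := by
    have h1 : 2 * (ℓ:ℝ) * ε ≤ 2 * ℓ * x := by nlinarith
    have h2 : 2 * (ℓ:ℝ) * ε ≤ |2 * ℓ * x - π| := by
      have : 2 * (ℓ:ℝ) * x - π = 2 * ℓ * (x - π / (2 * ℓ)) := by field_simp
      rw [this, abs_mul, abs_of_pos (by positivity : (0:ℝ) < 2 * (ℓ:ℝ))]
      have := he2.le
      nlinarith [abs_nonneg (x - π / (2 * ℓ))]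
    have h3 : 2 * (ℓ:ℝ) * x ≤ 2 * π - 2 * ℓ * ε := by
      have : x ≤ π / ℓ - ε := he3.le
      have hh : 2 * (ℓ:ℝ) * x ≤ 2 * ℓ * (π / ℓ - ε) := by nlinarith
      calc 2 * (ℓ:ℝ) * x ≤ 2 * ℓ * (π / ℓ - ε) := hh
        _ = 2 * π - 2 * ℓ * ε := by field_simp
    have hs := sin_lb_abs hδpos hδhalf h1 h2 h3
    have hm := Real.mul_le_sin (le_of_lt hδpos) hδhalf
    calc 4 * (ℓ:ℝ) / π * ε = 2 / π * (2 * ℓ * ε) := by ring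
      _ ≤ Real.sin (2 * ℓ * ε) := hm
      _ ≤ |Real.sin (2 * ℓ * x)| := hs
  have hsinpos : 0 < |Real.sin (2 * (ℓ:ℝ) * x)| := lt_of_lt_of_le (by positivity) hsinLB
  have hsinne : Real.sin (2 * (ℓ:ℝ) * x) ≠ 0 := by
    intro h; rw [h, abs_zero] at hsinpos; exact lt_irrefl _ hsinpos
  -- set up S and c
  set c : ℝ := Real.cos (ℓ * x / 2) ^ 2 with hc
  set S : ℝ := ∑ j ∈ Finset.range m, ∑ k ∈ Finset.range ℓ,
      Real.cos ((4 * (ℓ:ℝ) * j + 2 * k + ℓ) * x) with hSdef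
  have hc0 : 0 ≤ c := sq_nonneg _
  have hc1 : c ≤ 1 := Real.cos_sq_le_one _
  -- block sum identity
  have hblock : (∑ j ∈ Finset.range m, ∑ k ∈ Finset.range ℓ,
        (Real.cos (((2 * ℓ * j + k : ℕ) : ℝ) * x) +
          Real.cos (((2 * ℓ * j + ℓ + k : ℕ) : ℝ) * x)) ^ 2)
      = 2 * c * (ℓ * m) + 2 * c * S := by
    have hterm : ∀ j ∈ Finset.range m, ∀ k ∈ Finset.range ℓ,
        (Real.cos (((2 * ℓ * j + k : ℕ) : ℝ) * x) +
          Real.cos (((2 * ℓ * j + ℓ + k : ℕ) : ℝ) * x)) ^ 2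
        = 2 * c + 2 * c * Real.cos ((4 * (ℓ:ℝ) * j + 2 * k + ℓ) * x) := by
      intro j _ k _
      have e1 : ((2 * ℓ * j + k : ℕ) : ℝ) = 2 * (ℓ:ℝ) * j + k := by push_cast; ring
      have e2 : ((2 * ℓ * j + ℓ + k : ℕ) : ℝ) = (2 * (ℓ:ℝ) * j + k) + ℓ := by push_cast; ring
      rw [e1, e2, pair_sq (2 * (ℓ:ℝ) * j + k) ℓ x,
        show 2 * (2 * (ℓ:ℝ) * j + k) + ℓ = 4 * (ℓ:ℝ) * j + 2 * k + ℓ by ring]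
      rw [hc]
      ring
    rw [Finset.sum_congr rfl (fun j hj => Finset.sum_congr rfl (hterm j hj))]
    rw [hSdef]
    simp only [Finset.sum_add_distrib, Finset.sum_const, Finset.card_range, nsmul_eq_mul,
      ← Finset.mul_sum]
    push_cast
    ring
  -- bound S
  have hSbound : |S| ≤ π / 4 * (n:ℝ) ^ ν := by
    have hswap : S = ∑ k ∈ Finset.range ℓ, ∑ j ∈ Finset.range m,
        Real.cos ((2 * (k:ℝ) + ℓ) * x + j * (4 * ℓ * x)) := by
      rw [hSdef, Finset.sum_comm]
      refine Finset.sum_congr rfl fun k _ => Finset.sum_congr rfl fun j _ => ?_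
      ring_nf
    have hinner : ∀ k : ℕ, |∑ j ∈ Finset.range m,
        Real.cos ((2 * (k:ℝ) + ℓ) * x + j * (4 * ℓ * x))|
        ≤ 1 / |Real.sin (2 * ℓ * x)| := by
      intro k
      have hd : Real.sin ((4 * (ℓ:ℝ) * x) / 2) ≠ 0 := by
        rw [show (4 * (ℓ:ℝ) * x) / 2 = 2 * ℓ * x by ring]; exact hsinne
      have := dirichlet_bound ((2 * (k:ℝ) + ℓ) * x) (4 * ℓ * x) m hd
      rwa [show (4 * (ℓ:ℝ) * x) / 2 = 2 * ℓ * x by ring] at this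
    have h1 : |S| ≤ (ℓ:ℝ) * (1 / |Real.sin (2 * ℓ * x)|) := by
      rw [hswap]
      calc |∑ k ∈ Finset.range ℓ, ∑ j ∈ Finset.range m,
            Real.cos ((2 * (k:ℝ) + ℓ) * x + j * (4 * ℓ * x))|
          ≤ ∑ k ∈ Finset.range ℓ, |∑ j ∈ Finset.range m,
            Real.cos ((2 * (k:ℝ) + ℓ) * x + j * (4 * ℓ * x))| :=
            Finset.abs_sum_le_sum_abs _ _
        _ ≤ ∑ _k ∈ Finset.range ℓ, 1 / |Real.sin (2 * ℓ * x)| :=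
            Finset.sum_le_sum fun k _ => hinner k
        _ = (ℓ:ℝ) * (1 / |Real.sin (2 * ℓ * x)|) := by
            rw [Finset.sum_const, Finset.card_range, nsmul_eq_mul]
    have h2 : (ℓ:ℝ) * (1 / |Real.sin (2 * ℓ * x)|) ≤ π / 4 * (n:ℝ) ^ ν := by
      have hinv : 1 / |Real.sin (2 * (ℓ:ℝ) * x)| ≤ 1 / (4 * ℓ / π * ε) :=
        div_le_div_of_nonneg_left zero_le_one (by positivity) hsinLB
      calc (ℓ:ℝ) * (1 / |Real.sin (2 * ℓ * x)|) ≤ (ℓ:ℝ) * (1 / (4 * ℓ / π * ε)) := by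
            exact mul_le_mul_of_nonneg_left hinv hLpos.le
        _ = π / 4 * ε⁻¹ := by field_simp
        _ = π / 4 * (n:ℝ) ^ ν := by rw [hεeq, inv_inv]
    linarith
  -- bound tail
  have hcard : ((Finset.Icc (2 * ℓ * m) n).card : ℝ) ≤ 2 * ℓ := by
    have h5 : n + 1 ≤ 2 * ℓ * m + 2 * ℓ := by
      have h5' : (n:ℤ) + 1 ≤ 2 * (ℓ:ℤ) * m + 2 * ℓ := by
        have h2l : (2:ℤ) ≤ 2 * (ℓ:ℤ) := by
          have : (1:ℤ) ≤ (ℓ:ℤ) := by exact_mod_cast hℓ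
          linarith
        linarith
      exact_mod_cast h5'
    have : (Finset.Icc (2 * ℓ * m) n).card ≤ 2 * ℓ := by
      rw [Nat.card_Icc]
      exact Nat.sub_le_iff_le_add.mpr (by linarith)
    exact_mod_cast this
  have hT : |∑ j ∈ Finset.Icc (2 * ℓ * m) n, Real.cos ((j : ℝ) * x) ^ 2| ≤ 2 * ℓ := by
    calc |∑ j ∈ Finset.Icc (2 * ℓ * m) n, Real.cos ((j : ℝ) * x) ^ 2|
        ≤ ∑ j ∈ Finset.Icc (2 * ℓ * m) n, |Real.cos ((j : ℝ) * x) ^ 2| :=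
          Finset.abs_sum_le_sum_abs _ _
      _ ≤ ∑ _j ∈ Finset.Icc (2 * ℓ * m) n, 1 := by
          refine Finset.sum_le_sum fun j _ => ?_
          rw [abs_of_nonneg (sq_nonneg _)]
          exact Real.cos_sq_le_one _
      _ = ((Finset.Icc (2 * ℓ * m) n).card : ℝ) := by
          rw [Finset.sum_const, nsmul_eq_mul, mul_one]
      _ ≤ 2 * ℓ := hcard
  -- r bound and n as real
  have hL1 : (1:ℝ) ≤ (ℓ:ℝ) := by exact_mod_cast hℓ
  have hrabs : |(r:ℝ)| ≤ 2 * ℓ := by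
    rw [abs_le]
    constructor
    · have : (-1:ℝ) ≤ (r:ℝ) := by exact_mod_cast hr1
      linarith
    · have : (r:ℝ) ≤ 2 * (ℓ:ℝ) - 2 := by exact_mod_cast hr2
      linarith
  have hnR : (n:ℝ) = 2 * ℓ * m + r := by exact_mod_cast congrArg (Int.cast : ℤ → ℝ) hnr
  -- final assembly
  rw [hblock]
  have hgoal : 2 * c * (↑ℓ * ↑m) + 2 * c * S +
      (∑ j ∈ Finset.Icc (2 * ℓ * m) n, Real.cos ((j : ℝ) * x) ^ 2) - (n:ℝ) * c
      = 2 * c * S + (∑ j ∈ Finset.Icc (2 * ℓ * m) n, Real.cos ((j : ℝ) * x) ^ 2) - r * c := by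
    rw [hnR]; ring
  rw [hgoal]
  set T : ℝ := ∑ j ∈ Finset.Icc (2 * ℓ * m) n, Real.cos ((j : ℝ) * x) ^ 2
  have step1 : |2 * c * S + T - r * c| ≤ 2 * c * |S| + |T| + |(r:ℝ)| * c := by
    calc |2 * c * S + T - r * c| ≤ |2 * c * S + T| + |(r:ℝ) * c| := abs_sub _ _
      _ ≤ |2 * c * S| + |T| + |(r:ℝ) * c| := by
          have := abs_add_le (2 * c * S) T
          linarith
      _ = 2 * c * |S| + |T| + |(r:ℝ)| * c := by
          have e1 : |2 * c * S| = 2 * c * |S| := by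
            rw [abs_mul, abs_of_nonneg (by linarith : (0:ℝ) ≤ 2 * c)]
          have e2 : |(r:ℝ) * c| = |(r:ℝ)| * c := by
            rw [abs_mul, abs_of_nonneg hc0]
          rw [e1, e2]
  have habsS : 0 ≤ |S| := abs_nonneg _
  have hfin : 2 * c * |S| + |T| + |(r:ℝ)| * c ≤ (π / 2 + 4 * ℓ) * (n:ℝ) ^ ν := by
    have h1 : 2 * c * |S| ≤ 2 * |S| := by nlinarith
    have h2 : |(r:ℝ)| * c ≤ 2 * ℓ := by nlinarith [abs_nonneg (r:ℝ)]
    have h3 : 2 * |S| ≤ π / 2 * (n:ℝ) ^ ν := by linarith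
    have h4 : (4:ℝ) * ℓ ≤ 4 * ℓ * (n:ℝ) ^ ν := by nlinarith
    nlinarith
  linarith
end

section
/- Fix ℓ ∈ ℕ with ℓ ≥ 1 and a ∈ (0, 1/5). For n ∈ ℕ write n = 2ℓm + r with m ∈ ℕ and r ∈ {−1, 0, …, 2ℓ−2}, and define C_n(x) = Σ_{j=0}^{m−1} Σ_{k=0}^{ℓ−1} ((2ℓj+k) sin((2ℓj+k)x) + (2ℓj+ℓ+k) sin((2ℓj+ℓ+k)x))² + Σ_{j=2ℓm}^{n} j² sin²(jx). Let E_n = [0, π/ℓ] \ ([0, n^{−a}] ∪ [π/(2ℓ) − n^{−a}, π/(2ℓ) + n^{−a}] ∪ [π/ℓ − n^{−a}, π/ℓ]). Then there exist C > 0 and N such that for all n ≥ N and all x ∈ E_n, |C_n(x) − (n³/3) cos²(ℓx/2)| ≤ C n^{2+a}. -/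
/-!
Put `a = 2ℓj + k` and `b = a + ℓ`. Since `2 sin(ax) sin(bx) = cos(ℓx) - cos((a+b)x)`, expanding
the squares gives `C_n(x) = ∑_{i ≤ n} i² sin²(ix) + W cos(ℓx) - Y` with `W = ∑ ab = n³/6 + O(ℓn²)`
and `Y = ∑ ab cos((a+b)x)`; moreover `∑_{i ≤ n} i² sin²(ix) = ∑ i²/2 - ∑ i² cos(2ix)/2` and
`(n³/3) cos²(ℓx/2) = n³/6 + (n³/6) cos(ℓx)`, so the main terms cancel up to `O(ℓn²)`.
The two oscillating sums are handled by Abel summation against the bounded sums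
`∑ cos(jθ + φ)`, which gives `O(n² / |sin x|)` and `O(ℓn² / |sin 2ℓx|)`. Off the excised
neighbourhoods of `0`, `π/(2ℓ)` and `π/ℓ`, Jordan's inequality bounds both sines below by
`2n^(-a)/π`.
-/

open Real Set Finset

lemma sum_range_sum_range_mul_add {M : Type*} [AddCommMonoid M] (f : ℕ → M) (L m : ℕ) :
    ∑ j ∈ range m, ∑ k ∈ range L, f (L * j + k) = ∑ i ∈ range (L * m), f i := by
  induction m with
  | zero => simp
  | succ m ih => rw [sum_range_succ, ih, mul_add_one, sum_range_add]

lemma sum_range_sum_range_pair {M : Type*} [AddCommMonoid M] (f : ℕ → M) (ℓ m : ℕ) :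
    ∑ j ∈ range m, ∑ k ∈ range ℓ, (f (2 * ℓ * j + k) + f (2 * ℓ * j + ℓ + k)) =
      ∑ i ∈ range (2 * ℓ * m), f i := by
  rw [← sum_range_sum_range_mul_add]
  refine sum_congr rfl fun j _ => ?_
  rw [sum_add_distrib, two_mul, sum_range_add]
  simp only [add_assoc]

lemma sum_range_sq (u : ℕ) :
    ∑ i ∈ range u, (i : ℝ) ^ 2 = (u : ℝ) ^ 3 / 3 - (u : ℝ) ^ 2 / 2 + u / 6 := by
  induction u with
  | zero => simp
  | succ u ih => rw [sum_range_succ, ih]; push_cast; ring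

lemma abs_sum_range_cos_le {θ : ℝ} (hθ : sin (θ / 2) ≠ 0) (φ : ℝ) (k : ℕ) :
    |∑ j ∈ range k, cos (j * θ + φ)| ≤ 1 / |sin (θ / 2)| := by
  have htel : 2 * sin (θ / 2) * ∑ j ∈ range k, cos (j * θ + φ) =
      sin (k * θ + φ - θ / 2) - sin (φ - θ / 2) := by
    have := sum_range_sub (fun j : ℕ => sin (j * θ + φ - θ / 2)) k
    simp only [Nat.cast_zero, zero_mul, zero_add] at this
    rw [mul_sum, ← this]
    refine sum_congr rfl fun j _ => ?_
    rw [two_mul_sin_mul_cos, show θ / 2 - (j * θ + φ) = -(j * θ + φ - θ / 2) by ring, sin_neg]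
    push_cast
    ring_nf
  have hbound : |2 * sin (θ / 2) * ∑ j ∈ range k, cos (j * θ + φ)| ≤ 2 := by
    have h₁ := abs_sin_le_one (k * θ + φ - θ / 2)
    have h₂ := abs_sin_le_one (φ - θ / 2)
    rw [htel]
    linarith [abs_sub (sin (k * θ + φ - θ / 2)) (sin (φ - θ / 2))]
  rw [abs_mul, abs_mul, abs_two] at hbound
  rw [le_div_iff₀ (abs_pos.mpr hθ)]
  linarith

lemma abs_sum_range_mul_le_of_monotone {f g : ℕ → ℝ} (hf : Monotone f) (hf₀ : 0 ≤ f 0) {B : ℝ}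
    (hg : ∀ k, |∑ j ∈ range k, g j| ≤ B) (N : ℕ) :
    |∑ j ∈ range N, f j * g j| ≤ 2 * f N * B := by
  have hB : 0 ≤ B := by simpa using hg 0
  have hfN : 0 ≤ f N := hf₀.trans (hf N.zero_le)
  have hlast : |f (N - 1) * ∑ j ∈ range N, g j| ≤ f N * B := by
    rw [abs_mul, abs_of_nonneg (hf₀.trans (hf (N - 1).zero_le))]
    exact mul_le_mul (hf (N.sub_le 1)) (hg N) (abs_nonneg _) hfN
  have hincr : |∑ i ∈ range (N - 1), (f (i + 1) - f i) * ∑ j ∈ range (i + 1), g j| ≤ f N * B :=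
    calc _ ≤ ∑ i ∈ range (N - 1), (f (i + 1) - f i) * B := by
          refine (abs_sum_le_sum_abs _ _).trans (sum_le_sum fun i _ => ?_)
          rw [abs_mul, abs_of_nonneg (sub_nonneg.mpr (hf i.le_succ))]
          exact mul_le_mul_of_nonneg_left (hg _) (sub_nonneg.mpr (hf i.le_succ))
      _ = (f (N - 1) - f 0) * B := by rw [← sum_mul, sum_range_sub]
      _ ≤ f N * B := by gcongr; linarith [hf (N.sub_le 1)]
  have hparts := sum_range_by_parts f g N
  simp only [smul_eq_mul] at hparts
  rw [hparts]
  linarith [abs_sub (f (N - 1) * ∑ j ∈ range N, g j)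
    (∑ i ∈ range (N - 1), (f (i + 1) - f i) * ∑ j ∈ range (i + 1), g j)]

lemma two_div_pi_mul_le_sin_s13 {d t : ℝ} (hd : 0 ≤ d) (h₁ : d ≤ t) (h₂ : t ≤ π - d) :
    2 / π * d ≤ sin t := by
  rcases le_total t (π / 2) with h | h
  · exact (mul_le_mul_of_nonneg_left h₁ (by positivity)).trans (mul_le_sin (hd.trans h₁) h)
  · rw [← sin_pi_sub]
    exact (mul_le_mul_of_nonneg_left (by linarith) (by positivity)).trans
      (mul_le_sin (by linarith) (by linarith))

lemma two_div_pi_mul_le_abs_sin {d t : ℝ} (hd : 0 ≤ d) (h₁ : d ≤ t) (h₂ : t ≤ 2 * π - d)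
    (h₃ : d ≤ |t - π|) : 2 / π * d ≤ |sin t| := by
  rcases le_total t π with h | h
  · rw [abs_of_nonpos (by linarith)] at h₃
    exact (two_div_pi_mul_le_sin_s13 hd h₁ (by linarith)).trans (le_abs_self _)
  · rw [abs_of_nonneg (by linarith)] at h₃
    have := two_div_pi_mul_le_sin_s13 hd h₃ (by linarith : t - π ≤ π - d)
    rw [sin_sub_pi] at this
    exact this.trans (neg_le_abs _)

lemma mul_sin_add_mul_sin_sq (a b x : ℝ) :
    (a * sin (a * x) + b * sin (b * x)) ^ 2 =
      a ^ 2 * sin (a * x) ^ 2 + b ^ 2 * sin (b * x) ^ 2 +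
        a * b * (cos ((b - a) * x) - cos ((a + b) * x)) := by
  have h := two_mul_sin_mul_sin (b * x) (a * x)
  rw [← sub_mul, ← add_mul, add_comm b a] at h
  linear_combination a * b * h

lemma sum_range_sq_mul_sin_sq (N : ℕ) (x : ℝ) :
    ∑ i ∈ range N, (i : ℝ) ^ 2 * sin (i * x) ^ 2 =
      (∑ i ∈ range N, (i : ℝ) ^ 2) / 2 - (∑ i ∈ range N, (i : ℝ) ^ 2 * cos (i * (2 * x))) / 2 := by
  rw [sum_div, sum_div, ← sum_sub_distrib]
  refine sum_congr rfl fun i _ => ?_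
  rw [sin_sq_eq_half_sub, mul_left_comm]
  ring

/-- `C_n(x)`, for `n = 2ℓm + r`. -/
noncomputable def pairwiseBlockSum (ℓ m n : ℕ) (x : ℝ) : ℝ :=
  ∑ j ∈ range m, ∑ k ∈ range ℓ,
      (((2 * ℓ * j + k : ℕ) : ℝ) * sin (((2 * ℓ * j + k : ℕ) : ℝ) * x) +
        ((2 * ℓ * j + ℓ + k : ℕ) : ℝ) * sin (((2 * ℓ * j + ℓ + k : ℕ) : ℝ) * x)) ^ 2 +
    ∑ j ∈ Finset.Icc (2 * ℓ * m) n, (j : ℝ) ^ 2 * sin (j * x) ^ 2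

def crossWeight (ℓ m : ℕ) : ℝ :=
  ∑ j ∈ range m, ∑ k ∈ range ℓ, ((2 * ℓ * j + k : ℕ) : ℝ) * ((2 * ℓ * j + ℓ + k : ℕ) : ℝ)

noncomputable def crossOscillation (ℓ m : ℕ) (x : ℝ) : ℝ :=
  ∑ j ∈ range m, ∑ k ∈ range ℓ, ((2 * ℓ * j + k : ℕ) : ℝ) * ((2 * ℓ * j + ℓ + k : ℕ) : ℝ) *
    cos (j * (4 * ℓ * x) + (2 * k + ℓ) * x)

lemma pairwiseBlockSum_eq {ℓ m n : ℕ} (h : 2 * ℓ * m ≤ n + 1) (x : ℝ) :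
    pairwiseBlockSum ℓ m n x =
      (∑ i ∈ range (n + 1), (i : ℝ) ^ 2) / 2 -
        (∑ i ∈ range (n + 1), (i : ℝ) ^ 2 * cos (i * (2 * x))) / 2 +
        cos (ℓ * x) * crossWeight ℓ m - crossOscillation ℓ m x := by
  have hterm : ∀ j k : ℕ,
      (((2 * ℓ * j + k : ℕ) : ℝ) * sin (((2 * ℓ * j + k : ℕ) : ℝ) * x) +
        ((2 * ℓ * j + ℓ + k : ℕ) : ℝ) * sin (((2 * ℓ * j + ℓ + k : ℕ) : ℝ) * x)) ^ 2 =
      (((2 * ℓ * j + k : ℕ) : ℝ) ^ 2 * sin (((2 * ℓ * j + k : ℕ) : ℝ) * x) ^ 2 +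
        ((2 * ℓ * j + ℓ + k : ℕ) : ℝ) ^ 2 * sin (((2 * ℓ * j + ℓ + k : ℕ) : ℝ) * x) ^ 2) +
      cos (ℓ * x) * (((2 * ℓ * j + k : ℕ) : ℝ) * ((2 * ℓ * j + ℓ + k : ℕ) : ℝ)) -
      ((2 * ℓ * j + k : ℕ) : ℝ) * ((2 * ℓ * j + ℓ + k : ℕ) : ℝ) *
        cos (j * (4 * ℓ * x) + (2 * k + ℓ) * x) := by
    intro j k
    rw [mul_sin_add_mul_sin_sq]
    push_cast
    ring_nf
  have hsplit := sum_range_add_sum_Ico (fun i : ℕ => (i : ℝ) ^ 2 * sin (i * x) ^ 2) h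
  rw [Finset.Ico_add_one_right_eq_Icc] at hsplit
  rw [pairwiseBlockSum, crossWeight, crossOscillation, mul_sum, ← sum_range_sq_mul_sin_sq,
    ← hsplit, ← sum_range_sum_range_pair (fun i : ℕ => (i : ℝ) ^ 2 * sin (i * x) ^ 2)]
  simp only [hterm, sum_add_distrib, sum_sub_distrib, mul_sum]
  ring

lemma two_mul_crossWeight (ℓ m : ℕ) :
    2 * crossWeight ℓ m = ∑ i ∈ range (2 * ℓ * m), (i : ℝ) ^ 2 - (ℓ : ℝ) ^ 3 * m := by
  rw [crossWeight, ← sum_range_sum_range_pair, mul_sum]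
  have hconst : (ℓ : ℝ) ^ 3 * m = ∑ j ∈ range m, ∑ k ∈ range ℓ, (ℓ : ℝ) ^ 2 := by
    simp only [sum_const, card_range, nsmul_eq_mul]
    ring
  rw [hconst, ← sum_sub_distrib]
  refine sum_congr rfl fun j _ => ?_
  rw [mul_sum, ← sum_sub_distrib]
  refine sum_congr rfl fun k _ => ?_
  push_cast
  ring

lemma abs_half_sum_range_sq_sub_le (n : ℕ) :
    |(∑ i ∈ range (n + 1), (i : ℝ) ^ 2) / 2 - (n : ℝ) ^ 3 / 6| ≤ (n : ℝ) ^ 2 := by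
  have hn : (n : ℝ) ≤ (n : ℝ) ^ 2 := by exact_mod_cast Nat.le_self_pow two_ne_zero n
  rw [sum_range_sq, abs_le]
  push_cast
  constructor <;> nlinarith

lemma abs_crossWeight_sub_le {ℓ m n : ℕ} (hn : 2 * ℓ + 1 ≤ n) (h₁ : 2 * ℓ * m ≤ n + 1)
    (h₂ : n ≤ 2 * ℓ * m + 2 * ℓ) :
    |crossWeight ℓ m - (n : ℝ) ^ 3 / 6| ≤ 4 * (ℓ + 1) * (n : ℝ) ^ 2 := by
  have hW : crossWeight ℓ m = ((2 * ℓ * m : ℕ) : ℝ) ^ 3 / 6 - ((2 * ℓ * m : ℕ) : ℝ) ^ 2 / 4 +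
      ((2 * ℓ * m : ℕ) : ℝ) / 12 - (ℓ : ℝ) ^ 2 * ((2 * ℓ * m : ℕ) : ℝ) / 4 := by
    linear_combination (norm := (push_cast; ring))
      two_mul_crossWeight ℓ m / 2 + sum_range_sq (2 * ℓ * m) / 2
  have hn' : 2 * (ℓ : ℝ) + 1 ≤ n := by exact_mod_cast hn
  have h₁' : ((2 * ℓ * m : ℕ) : ℝ) ≤ n + 1 := by exact_mod_cast h₁
  have h₂' : (n : ℝ) ≤ ((2 * ℓ * m : ℕ) : ℝ) + 2 * ℓ := by exact_mod_cast h₂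
  rw [hW]
  set u : ℝ := ((2 * ℓ * m : ℕ) : ℝ)
  have hu₀ : 0 ≤ u := Nat.cast_nonneg _
  -- `|u - n| ≤ 2ℓ + 1` and `u ≤ 2n` control every term
  have hcube : |u ^ 3 - (n : ℝ) ^ 3| ≤ (2 * ℓ + 1) * (7 * (n : ℝ) ^ 2) := by
    rw [show u ^ 3 - (n : ℝ) ^ 3 = (u - n) * (u ^ 2 + u * n + (n : ℝ) ^ 2) by ring, abs_mul,
      abs_of_nonneg (by positivity : 0 ≤ u ^ 2 + u * n + (n : ℝ) ^ 2)]
    gcongr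
    · rw [abs_le]; constructor <;> linarith
    · nlinarith
  have hu₂ : u ^ 2 ≤ 4 * (n : ℝ) ^ 2 := by nlinarith
  have hℓu : (ℓ : ℝ) * u ≤ 2 * (n : ℝ) ^ 2 := by nlinarith
  have hℓ₂u : (ℓ : ℝ) ^ 2 * u ≤ 2 * ℓ * (n : ℝ) ^ 2 := by nlinarith
  rw [abs_le] at hcube ⊢
  constructor <;> nlinarith

lemma abs_sum_range_sq_mul_cos_le {x : ℝ} (hx : sin x ≠ 0) (N : ℕ) :
    |∑ i ∈ range N, (i : ℝ) ^ 2 * cos (i * (2 * x))| ≤ 2 * (N : ℝ) ^ 2 / |sin x| := by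
  have hx' : sin (2 * x / 2) ≠ 0 := by rwa [mul_div_cancel_left₀ x two_ne_zero]
  have hmono : Monotone fun i : ℕ => (i : ℝ) ^ 2 := fun a b hab =>
    pow_le_pow_left₀ (Nat.cast_nonneg _) (Nat.cast_le.mpr hab) 2
  have := abs_sum_range_mul_le_of_monotone hmono (by simp) (abs_sum_range_cos_le hx' 0) N
  simpa [mul_div_cancel_left₀ x two_ne_zero, div_eq_mul_inv] using this

lemma abs_crossOscillation_le (ℓ m : ℕ) {x : ℝ} (hx : sin (2 * ℓ * x) ≠ 0) :
    |crossOscillation ℓ m x| ≤ 2 * ℓ * (2 * ℓ * m + 2 * ℓ : ℝ) ^ 2 / |sin (2 * ℓ * x)| := by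
  have hx' : sin (4 * ℓ * x / 2) ≠ 0 := by rwa [show 4 * (ℓ : ℝ) * x / 2 = 2 * ℓ * x by ring]
  -- for fixed `k`, the sum over `j` is an Abel sum with frequency `4ℓx`
  have hinner : ∀ k ∈ range ℓ, |∑ j ∈ range m, ((2 * ℓ * j + k : ℕ) : ℝ) *
      ((2 * ℓ * j + ℓ + k : ℕ) : ℝ) * cos (j * (4 * ℓ * x) + (2 * k + ℓ) * x)| ≤
      2 * (2 * ℓ * m + 2 * ℓ : ℝ) ^ 2 / |sin (2 * ℓ * x)| := by
    intro k hk
    have hkℓ : (k : ℝ) ≤ ℓ := by exact_mod_cast (mem_range.mp hk).le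
    set f : ℕ → ℝ := fun j => ((2 * ℓ * j + k : ℕ) : ℝ) * ((2 * ℓ * j + ℓ + k : ℕ) : ℝ)
    have hmono : Monotone f := fun a b hab => by simp only [f]; gcongr
    have hfm : f m ≤ (2 * ℓ * m + 2 * ℓ : ℝ) ^ 2 := by
      simp only [f]
      push_cast
      rw [sq]
      exact mul_le_mul (by linarith) (by linarith) (by positivity) (by positivity)
    calc _ ≤ 2 * f m * (1 / |sin (4 * ℓ * x / 2)|) :=
          abs_sum_range_mul_le_of_monotone hmono (by positivity)
            (abs_sum_range_cos_le hx' ((2 * k + ℓ) * x)) m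
      _ ≤ _ := by
          rw [show 4 * (ℓ : ℝ) * x / 2 = 2 * ℓ * x by ring, mul_one_div]
          gcongr
  calc |crossOscillation ℓ m x|
      ≤ ∑ k ∈ range ℓ, |∑ j ∈ range m, ((2 * ℓ * j + k : ℕ) : ℝ) *
          ((2 * ℓ * j + ℓ + k : ℕ) : ℝ) * cos (j * (4 * ℓ * x) + (2 * k + ℓ) * x)| := by
        rw [crossOscillation, sum_comm]
        exact abs_sum_le_sum_abs _ _
    _ ≤ ∑ _k ∈ range ℓ, 2 * (2 * ℓ * m + 2 * ℓ : ℝ) ^ 2 / |sin (2 * ℓ * x)| := sum_le_sum hinner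
    _ = _ := by rw [sum_const, card_range, nsmul_eq_mul]; ring

/-- `E_n`, with `ε` in place of `n^(-a)`. -/
def excisedInterval (ℓ : ℕ) (ε : ℝ) : Set ℝ :=
  Set.Icc 0 (π / ℓ) \
    (Set.Icc 0 ε ∪ Set.Icc (π / (2 * ℓ) - ε) (π / (2 * ℓ) + ε) ∪ Set.Icc (π / ℓ - ε) (π / ℓ))

lemma two_div_pi_mul_le_abs_sin_of_mem_excisedInterval {ℓ : ℕ} (hℓ : 1 ≤ ℓ) {ε x : ℝ}
    (hε : 0 ≤ ε) (hx : x ∈ excisedInterval ℓ ε) :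
    2 / π * ε ≤ |sin x| ∧ 2 / π * ε ≤ |sin (2 * ℓ * x)| := by
  simp only [excisedInterval, Set.mem_sdiff, Set.mem_union, Set.mem_Icc, not_or, not_and,
    not_le] at hx
  obtain ⟨⟨hx₀, hxπ⟩, ⟨hleft, hmid⟩, hright⟩ := hx
  have hℓ' : (1 : ℝ) ≤ ℓ := by exact_mod_cast hℓ
  have hεx : ε < x := hleft hx₀
  have hxε : x < π / ℓ - ε := lt_of_not_ge fun h => (hright h).not_ge hxπ
  have hπℓ : π / ℓ ≤ π := div_le_self pi_pos.le hℓ'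
  refine ⟨two_div_pi_mul_le_abs_sin hε hεx.le (by linarith) ?_, ?_⟩
  · rw [abs_of_nonpos (by linarith)]; linarith
  · have hℓε : ε ≤ ℓ * ε := le_mul_of_one_le_left hε hℓ'
    have hℓπ : ℓ * (π / ℓ) = π := mul_div_cancel₀ π (by positivity)
    have hℓπ₂ : 2 * ℓ * (π / (2 * ℓ)) = π := mul_div_cancel₀ π (by positivity)
    have hℓx : ℓ * ε < ℓ * x := by gcongr
    have hxℓ : ℓ * x < ℓ * (π / ℓ - ε) := by gcongr
    refine two_div_pi_mul_le_abs_sin hε (by linarith) (by linarith) ?_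
    rcases lt_or_ge x (π / (2 * ℓ) - ε) with h | h
    · have : 2 * ℓ * x < 2 * ℓ * (π / (2 * ℓ) - ε) := by gcongr
      rw [abs_of_nonpos (by linarith)]; linarith
    · have : 2 * ℓ * (π / (2 * ℓ) + ε) < 2 * ℓ * x := by have := hmid h; gcongr
      rw [abs_of_nonneg (by linarith)]; linarith

lemma div_abs_le_two_mul_div {ε s a : ℝ} (hε : 0 < ε) (hs : 2 / π * ε ≤ |s|) (ha : 0 ≤ a) :
    a / |s| ≤ 2 * a / ε :=
  calc a / |s| ≤ a / (2 / π * ε) := div_le_div_of_nonneg_left ha (by positivity) hs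
    _ = π / 2 * (a / ε) := by field_simp
    _ ≤ 2 * (a / ε) := by gcongr; linarith [pi_le_four]
    _ = 2 * a / ε := by ring

lemma abs_pairwiseBlockSum_sub_le {ℓ m n : ℕ} (hℓ : 1 ≤ ℓ) (hn : 2 * ℓ + 1 ≤ n)
    (h₁ : 2 * ℓ * m ≤ n + 1) (h₂ : n ≤ 2 * ℓ * m + 2 * ℓ) {ε x : ℝ} (hε₀ : 0 < ε) (hε₁ : ε ≤ 1)
    (hx : x ∈ excisedInterval ℓ ε) :
    |pairwiseBlockSum ℓ m n x - (n : ℝ) ^ 3 / 3 * cos (ℓ * x / 2) ^ 2| ≤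
      20 * (ℓ + 1) * (n : ℝ) ^ 2 / ε := by
  obtain ⟨hsx, hs2x⟩ := two_div_pi_mul_le_abs_sin_of_mem_excisedInterval hℓ hε₀.le hx
  have hP := abs_half_sum_range_sq_sub_le n
  have hW := abs_crossWeight_sub_le hn h₁ h₂
  have hδ : 0 < 2 / π * ε := by positivity
  have hQ := (abs_sum_range_sq_mul_cos_le (abs_pos.mp (hδ.trans_le hsx)) (n + 1)).trans
    (div_abs_le_two_mul_div hε₀ hsx (by positivity))
  have hY := (abs_crossOscillation_le ℓ m (abs_pos.mp (hδ.trans_le hs2x))).trans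
    (div_abs_le_two_mul_div hε₀ hs2x (by positivity))
  have hcW : |cos (ℓ * x) * (crossWeight ℓ m - (n : ℝ) ^ 3 / 6)| ≤ 4 * (ℓ + 1) * (n : ℝ) ^ 2 := by
    rw [abs_mul]
    exact (mul_le_of_le_one_left (abs_nonneg _) (abs_cos_le_one _)).trans hW
  have hcos : cos (ℓ * x / 2) ^ 2 = 1 / 2 + cos (ℓ * x) / 2 := by
    rw [cos_sq, mul_div_cancel₀ _ two_ne_zero]
  rw [pairwiseBlockSum_eq h₁, hcos]
  have hn' : 2 * (ℓ : ℝ) + 1 ≤ n := by exact_mod_cast hn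
  have h₁' : 2 * (ℓ : ℝ) * m ≤ n + 1 := by exact_mod_cast h₁
  simp only [div_eq_mul_inv _ ε] at hQ hY ⊢
  push_cast at hQ
  set ρ := ε⁻¹
  have hρ : 1 ≤ ρ := one_le_inv_iff₀.mpr ⟨hε₀, hε₁⟩
  have hQ' : ((n : ℝ) + 1) ^ 2 * ρ ≤ (2 * n) ^ 2 * ρ := by gcongr; linarith
  have hY' : (2 * ℓ * m + 2 * ℓ : ℝ) ^ 2 * (ℓ * ρ) ≤ (2 * n) ^ 2 * (ℓ * ρ) := by
    gcongr; linarith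
  rw [abs_le] at hP hW hQ hY hcW ⊢
  constructor <;> nlinarith

/-- Uniform estimate `C_n(x) = (n³/3) cos²(ℓx/2) + O(n^(2+a))` on
`E_n = [0, π/ℓ] \ ([0, n^(-a)] ∪ [π/(2ℓ) - n^(-a), π/(2ℓ) + n^(-a)] ∪ [π/ℓ - n^(-a), π/ℓ])`. -/
theorem estimate_C_pairwise_blocks
    (ℓ : ℕ) (hℓ : 1 ≤ ℓ) (ν : ℝ) (hν : ν ∈ Set.Ioo (0 : ℝ) (1 / 5)) :
    ∃ C > 0, ∃ N : ℕ, ∀ n ≥ N, ∀ m : ℕ, ∀ r : ℤ,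
      (n : ℤ) = 2 * ℓ * m + r → -1 ≤ r → r ≤ 2 * ℓ - 2 →
      ∀ x ∈ Set.Icc (0 : ℝ) (π / ℓ) \
          (Set.Icc (0 : ℝ) ((n : ℝ) ^ (-ν)) ∪
            Set.Icc (π / (2 * ℓ) - (n : ℝ) ^ (-ν)) (π / (2 * ℓ) + (n : ℝ) ^ (-ν)) ∪
            Set.Icc (π / ℓ - (n : ℝ) ^ (-ν)) (π / ℓ)),
        |(∑ j ∈ Finset.range m, ∑ k ∈ Finset.range ℓ,
              (((2 * ℓ * j + k : ℕ) : ℝ) * Real.sin (((2 * ℓ * j + k : ℕ) : ℝ) * x) +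
                ((2 * ℓ * j + ℓ + k : ℕ) : ℝ) *
                  Real.sin (((2 * ℓ * j + ℓ + k : ℕ) : ℝ) * x)) ^ 2 +
            ∑ j ∈ Finset.Icc (2 * ℓ * m) n, (j : ℝ) ^ 2 * Real.sin ((j : ℝ) * x) ^ 2) -
          (n : ℝ) ^ 3 / 3 * Real.cos (ℓ * x / 2) ^ 2|
        ≤ C * (n : ℝ) ^ (2 + ν) := by
  refine ⟨20 * (ℓ + 1), by positivity, 2 * ℓ + 1, fun n hn m r hnr hr₁ hr₂ x hx => ?_⟩
  have h₁ : 2 * ℓ * m ≤ n + 1 := by zify; linarith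
  have h₂ : n ≤ 2 * ℓ * m + 2 * ℓ := by zify; linarith
  have hn₀ : (0 : ℝ) < n := by exact_mod_cast (show 0 < n by omega)
  have hε₁ : (n : ℝ) ^ (-ν) ≤ 1 :=
    rpow_le_one_of_one_le_of_nonpos (Nat.one_le_cast.mpr (by omega)) (by linarith [hν.1])
  calc _ ≤ 20 * (ℓ + 1) * (n : ℝ) ^ 2 / (n : ℝ) ^ (-ν) :=
        abs_pairwiseBlockSum_sub_le hℓ hn h₁ h₂ (rpow_pos_of_pos hn₀ _) hε₁ hx
    _ = 20 * (ℓ + 1) * (n : ℝ) ^ (2 + ν) := by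
        rw [rpow_neg hn₀.le, div_inv_eq_mul, rpow_add hn₀, rpow_two, mul_assoc]
end

section
/- Fix ℓ ∈ ℕ with ℓ ≥ 1 and a ∈ (0, 1/5). For n ∈ ℕ write n = 2ℓm + r with m ∈ ℕ and r ∈ {−1, 0, …, 2ℓ−2}, and define B_n(x) = −Σ_{j=0}^{m−1} Σ_{k=0}^{ℓ−1} (cos((2ℓj+k)x) + cos((2ℓj+ℓ+k)x)) ((2ℓj+k) sin((2ℓj+k)x) + (2ℓj+ℓ+k) sin((2ℓj+ℓ+k)x)) − Σ_{j=2ℓm}^{n} j sin(jx) cos(jx). Let E_n = [0, π/ℓ] \ ([0, n^{−a}] ∪ [π/(2ℓ) − n^{−a}, π/(2ℓ) + n^{−a}] ∪ [π/ℓ − n^{−a}, π/ℓ]). Then there exist C > 0 and N such that for all n ≥ N and all x ∈ E_n, |B_n(x)| ≤ C n^{1+a}. -/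
/-!
By product-to-sum formulas the `(j, k)` summand of `B_n` is a combination of `sin (4ℓ j x + φ)`
with coefficients linear in `j`, plus the constant `(ℓ / 2) sin (ℓ x)`. Summation by parts
against the Dirichlet bound `|∑_{j<M} sin (jθ + φ)| ≤ 1 / |sin (θ / 2)|` at `θ = 4ℓx` bounds the
double sum by `O(ℓ² (m + 1) / |sin 2ℓx|)`. On `E_n` the angle `2ℓx` keeps distance
`2ℓ n^(-a)` from `0`, `π` and `2π`, so Jordan's inequality gives `|sin 2ℓx| ≥ n^(-a)`; since
`ℓ m ≤ n` this is `O(n^(1+a))`. The remaining sum over `[2ℓm, n]` has at most `2ℓ` terms of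
size at most `n`.
-/

open Real Set

theorem cos_add_cos_mul_eq (u v a b : ℝ) :
    (cos u + cos v) * (a * sin u + b * sin v)
      = a / 2 * sin (2 * u) + b / 2 * sin (2 * v) + (a + b) / 2 * sin (u + v)
        + (b - a) / 2 * sin (v - u) := by
  rw [sin_two_mul, sin_two_mul, sin_add, sin_sub]; ring

theorem two_div_pi_mul_le_sin_of_le_of_le {δ y : ℝ} (hδ : 0 ≤ δ) (h₁ : δ ≤ y) (h₂ : y ≤ π - δ) :
    2 / π * δ ≤ sin y := by
  rcases le_total y (π / 2) with hy | hy
  · calc 2 / π * δ ≤ 2 / π * y := by gcongr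
      _ ≤ sin y := mul_le_sin (hδ.trans h₁) hy
  · calc 2 / π * δ ≤ 2 / π * (π - y) := by gcongr; linarith
      _ ≤ sin (π - y) := mul_le_sin (by linarith) (by linarith)
      _ = sin y := sin_pi_sub y

theorem le_abs_sin_two_mul_of_mem_diff {L ε x : ℝ} (hL : 1 ≤ L)
    (hx : x ∈ Icc 0 (π / L) \ (Icc 0 ε ∪ Icc (π / (2 * L) - ε) (π / (2 * L) + ε) ∪
      Icc (π / L - ε) (π / L))) :
    ε ≤ |sin (2 * L * x)| := by
  rcases lt_or_ge ε 0 with hε | hε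
  · exact hε.le.trans (abs_nonneg _)
  simp only [mem_sdiff, mem_union, mem_Icc, not_or, not_and, not_le] at hx
  obtain ⟨⟨hx0, hxπ⟩, ⟨hεx, hmid⟩, hend⟩ := hx
  have hxε : ε < x := hεx hx0
  have hxend : x < π / L - ε := lt_of_not_ge fun h => (hend h).not_ge hxπ
  have hL0 : 0 < L := by linarith
  have h2L : 2 * L * (π / (2 * L)) = π := by field_simp
  have hL : 2 * L * (π / L) = 2 * π := by field_simp
  -- `4 L / π ≥ 1`, so the Jordan bound `2 / π · (2 L ε)` beats `ε`
  have hsin : ∀ y, 2 * L * ε ≤ y → y ≤ π - 2 * L * ε → ε ≤ |sin y| := fun y h₁ h₂ =>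
    calc ε ≤ 2 / π * (2 * L * ε) := by
          rw [div_mul_eq_mul_div, le_div_iff₀ pi_pos]; nlinarith [pi_le_four]
      _ ≤ sin y := two_div_pi_mul_le_sin_of_le_of_le (by positivity) h₁ h₂
      _ ≤ |sin y| := le_abs_self _
  rcases lt_or_ge x (π / (2 * L) - ε) with hlow | hhigh
  · exact hsin _ (by nlinarith) (by nlinarith)
  · rw [← abs_neg, ← sin_sub_pi]
    have := hmid hhigh
    exact hsin _ (by nlinarith) (by nlinarith)

open Finset

theorem norm_sum_range_smul_le_of_monotone_s14 {E : Type*} [NormedAddCommGroup E] [NormedSpace ℝ E]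
    {f : ℕ → ℝ} {g : ℕ → E} {B : ℝ} (hf : Monotone f) (hf0 : 0 ≤ f 0)
    (hg : ∀ i, ‖∑ j ∈ range i, g j‖ ≤ B) (n : ℕ) :
    ‖∑ i ∈ range n, f i • g i‖ ≤ 2 * f n * B := by
  have hB : 0 ≤ B := by simpa using hg 0
  have hf_nonneg : ∀ i, 0 ≤ f i := fun i => hf0.trans (hf i.zero_le)
  have hf_step : ∀ i, 0 ≤ f (i + 1) - f i := fun i => sub_nonneg.2 (hf i.le_succ)
  rw [sum_range_by_parts]
  calc _ ≤ ‖f (n - 1) • ∑ j ∈ range n, g j‖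
          + ‖∑ i ∈ range (n - 1), (f (i + 1) - f i) • ∑ j ∈ range (i + 1), g j‖ :=
        norm_sub_le _ _
    _ ≤ f (n - 1) * B + ∑ i ∈ range (n - 1), (f (i + 1) - f i) * B := by
        gcongr
        · rw [norm_smul, Real.norm_of_nonneg (hf_nonneg _)]
          exact mul_le_mul_of_nonneg_left (hg n) (hf_nonneg _)
        · refine norm_sum_le_of_le _ fun i _ => ?_
          rw [norm_smul, Real.norm_of_nonneg (hf_step i)]
          exact mul_le_mul_of_nonneg_left (hg _) (hf_step i)
    _ = (2 * f (n - 1) - f 0) * B := by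
        rw [← sum_mul, sum_range_sub (fun i => f i)]; ring
    _ ≤ 2 * f n * B := by gcongr; linarith [hf (Nat.sub_le n 1), hf_nonneg 0]

theorem abs_sum_range_sin_le_inv {θ ε : ℝ} (hε : 0 < ε) (hθ : ε ≤ |sin (θ / 2)|)
    (φ : ℝ) (M : ℕ) :
    |∑ j ∈ range M, sin (j * θ + φ)| ≤ ε⁻¹ := by
  have htelescope : ∀ j : ℕ, 2 * sin (θ / 2) * sin (j * θ + φ)
      = cos (j * θ + φ - θ / 2) - cos (((j + 1 : ℕ) : ℝ) * θ + φ - θ / 2) := by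
    intro j
    rw [mul_right_comm, two_mul_sin_mul_sin]
    congr 2; push_cast; ring
  have hsum : 2 * sin (θ / 2) * ∑ j ∈ range M, sin (j * θ + φ)
      = cos (φ - θ / 2) - cos (M * θ + φ - θ / 2) := by
    rw [mul_sum, sum_congr rfl fun j _ => htelescope j, sum_range_sub']
    simp
  have hbound : |cos (φ - θ / 2) - cos (M * θ + φ - θ / 2)| ≤ 2 :=
    (abs_sub _ _).trans
      (by linarith [abs_cos_le_one (φ - θ / 2), abs_cos_le_one (M * θ + φ - θ / 2)])
  rw [← hsum, abs_mul, abs_mul, abs_two] at hbound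
  rw [← mul_one ε⁻¹, le_inv_mul_iff₀ hε]
  nlinarith [mul_le_mul_of_nonneg_right hθ (abs_nonneg (∑ j ∈ range M, sin (j * θ + φ)))]

noncomputable def pairedSummand (ℓ j k : ℕ) (x : ℝ) : ℝ :=
  (cos (((2 * ℓ * j + k : ℕ) : ℝ) * x) + cos (((2 * ℓ * j + ℓ + k : ℕ) : ℝ) * x)) *
    (((2 * ℓ * j + k : ℕ) : ℝ) * sin (((2 * ℓ * j + k : ℕ) : ℝ) * x) +
      ((2 * ℓ * j + ℓ + k : ℕ) : ℝ) * sin (((2 * ℓ * j + ℓ + k : ℕ) : ℝ) * x))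

theorem pairedSummand_eq (ℓ j k : ℕ) (x : ℝ) :
    pairedSummand ℓ j k x
      = (ℓ * j + k / 2) * sin (j * (4 * ℓ * x) + 2 * k * x)
        + (ℓ * j + (ℓ + k) / 2) * sin (j * (4 * ℓ * x) + (2 * ℓ + 2 * k) * x)
        + (2 * ℓ * j + (ℓ + 2 * k) / 2) * sin (j * (4 * ℓ * x) + (ℓ + 2 * k) * x)
        + ℓ / 2 * sin (ℓ * x) := by
  rw [pairedSummand, cos_add_cos_mul_eq]
  push_cast
  ring_nf

theorem abs_sum_range_linear_mul_sin_le {p q θ φ B : ℝ} (hp : 0 ≤ p) (hq : 0 ≤ q)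
    (hB : ∀ M : ℕ, |∑ j ∈ range M, sin (j * θ + φ)| ≤ B) (m : ℕ) :
    |∑ j ∈ range m, (p * j + q) * sin (j * θ + φ)| ≤ 2 * (p * m + q) * B := by
  have hmono : Monotone fun j : ℕ => p * j + q := fun i j hij => by
    dsimp only; gcongr
  simpa [mul_assoc] using norm_sum_range_smul_le_of_monotone_s14 (g := fun j : ℕ => sin (j * θ + φ))
    hmono (by simpa using hq) hB m

theorem abs_sum_range_pairedSummand_le {ℓ k : ℕ} (hk : k ≤ ℓ) {x B : ℝ}
    (hB : ∀ (φ : ℝ) (M : ℕ), |∑ j ∈ range M, sin (j * (4 * ℓ * x) + φ)| ≤ B) (m : ℕ) :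
    |∑ j ∈ range m, pairedSummand ℓ j k x| ≤ ℓ * ((8 * m + 6) * B + m) := by
  have hB0 : 0 ≤ B := by simpa using hB 0 0
  have hkℓ : (k : ℝ) ≤ ℓ := by exact_mod_cast hk
  have h₁ := abs_sum_range_linear_mul_sin_le (p := ℓ) (q := k / 2) (φ := 2 * k * x)
    (by positivity) (by positivity) (hB _) m
  have h₂ := abs_sum_range_linear_mul_sin_le (p := ℓ) (q := (ℓ + k) / 2)
    (φ := (2 * ℓ + 2 * k) * x) (by positivity) (by positivity) (hB _) m
  have h₃ := abs_sum_range_linear_mul_sin_le (p := 2 * ℓ) (q := (ℓ + 2 * k) / 2)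
    (φ := (ℓ + 2 * k) * x) (by positivity) (by positivity) (hB _) m
  have h₄ : |∑ _j ∈ range m, (ℓ : ℝ) / 2 * sin (ℓ * x)| ≤ m * (ℓ / 2) := by
    rw [sum_const, card_range, nsmul_eq_mul, abs_mul, abs_mul, Nat.abs_cast,
      abs_of_nonneg (by positivity : (0 : ℝ) ≤ ℓ / 2)]
    gcongr
    exact mul_le_of_le_one_right (by positivity) (abs_sin_le_one _)
  simp only [pairedSummand_eq, sum_add_distrib]
  refine (abs_add_le _ _).trans ?_
  refine (add_le_add_left (abs_add_three _ _ _) _).trans ?_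
  have hm : (0 : ℝ) ≤ m := m.cast_nonneg
  nlinarith

theorem abs_sum_range_sum_range_pairedSummand_le (ℓ m : ℕ) {x B : ℝ}
    (hB : ∀ (φ : ℝ) (M : ℕ), |∑ j ∈ range M, sin (j * (4 * ℓ * x) + φ)| ≤ B) :
    |∑ j ∈ range m, ∑ k ∈ range ℓ, pairedSummand ℓ j k x| ≤ ℓ ^ 2 * ((8 * m + 6) * B + m) := by
  rw [sum_comm]
  refine (abs_sum_le_sum_abs _ _).trans ?_
  refine (sum_le_card_nsmul _ _ _ fun k hk =>
    abs_sum_range_pairedSummand_le (mem_range.1 hk).le hB m).trans ?_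
  rw [card_range, nsmul_eq_mul, ← mul_assoc, ← sq]

theorem abs_sum_Icc_mul_sin_mul_cos_le (a b : ℕ) (x : ℝ) :
    |∑ j ∈ Icc a b, (j : ℝ) * sin (j * x) * cos (j * x)| ≤ #(Icc a b) * b := by
  refine (abs_sum_le_sum_abs _ _).trans ?_
  refine (sum_le_card_nsmul _ _ (b : ℝ) fun j hj => ?_).trans (by rw [nsmul_eq_mul])
  have hjb : (j : ℝ) ≤ b := by exact_mod_cast (mem_Icc.1 hj).2
  rw [abs_mul, abs_mul, Nat.abs_cast]
  calc (j : ℝ) * |sin (j * x)| * |cos (j * x)| ≤ b * 1 * 1 := by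
        gcongr
        exacts [abs_sin_le_one _, abs_cos_le_one _]
    _ = b := by ring

/-- Uniform estimate `B_n(x) = O(n^(1+a))` on
`E_n = [0, π/ℓ] \ ([0, n^(-a)] ∪ [π/(2ℓ) - n^(-a), π/(2ℓ) + n^(-a)] ∪ [π/ℓ - n^(-a), π/ℓ])`. -/
theorem estimate_B_pairwise_blocks
    (ℓ : ℕ) (hℓ : 1 ≤ ℓ) (ν : ℝ) (hν : ν ∈ Set.Ioo (0 : ℝ) (1 / 5)) :
    ∃ C > 0, ∃ N : ℕ, ∀ n ≥ N, ∀ m : ℕ, ∀ r : ℤ,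
      (n : ℤ) = 2 * ℓ * m + r → -1 ≤ r → r ≤ 2 * ℓ - 2 →
      ∀ x ∈ Set.Icc (0 : ℝ) (π / ℓ) \
          (Set.Icc (0 : ℝ) ((n : ℝ) ^ (-ν)) ∪
            Set.Icc (π / (2 * ℓ) - (n : ℝ) ^ (-ν)) (π / (2 * ℓ) + (n : ℝ) ^ (-ν)) ∪
            Set.Icc (π / ℓ - (n : ℝ) ^ (-ν)) (π / ℓ)),
        |-(∑ j ∈ Finset.range m, ∑ k ∈ Finset.range ℓ,
              (Real.cos (((2 * ℓ * j + k : ℕ) : ℝ) * x) +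
                Real.cos (((2 * ℓ * j + ℓ + k : ℕ) : ℝ) * x)) *
              (((2 * ℓ * j + k : ℕ) : ℝ) * Real.sin (((2 * ℓ * j + k : ℕ) : ℝ) * x) +
                ((2 * ℓ * j + ℓ + k : ℕ) : ℝ) *
                  Real.sin (((2 * ℓ * j + ℓ + k : ℕ) : ℝ) * x))) -
            ∑ j ∈ Finset.Icc (2 * ℓ * m) n,
              (j : ℝ) * Real.sin ((j : ℝ) * x) * Real.cos ((j : ℝ) * x)|
        ≤ C * (n : ℝ) ^ (1 + ν) := by
  refine ⟨17 * ℓ ^ 2, by positivity, 1, fun n hn m r hnr hr₁ hr₂ x hx => ?_⟩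
  have hn₁ : (1 : ℝ) ≤ n := by exact_mod_cast hn
  have hℓ₁ : (1 : ℝ) ≤ ℓ := by exact_mod_cast hℓ
  have hsin := le_abs_sin_two_mul_of_mem_diff hℓ₁ hx
  have hB : ∀ (φ : ℝ) (M : ℕ), |∑ j ∈ range M, sin (j * (4 * ℓ * x) + φ)| ≤ n ^ ν := by
    rw [← inv_inv ((n : ℝ) ^ ν), ← rpow_neg (by positivity)]
    exact abs_sum_range_sin_le_inv (by positivity)
      (by rwa [show 4 * (ℓ : ℝ) * x / 2 = 2 * ℓ * x by ring])
  have hnℓm : (n : ℤ) = 2 * (ℓ * m : ℕ) + r := by rw [hnr]; push_cast; ring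
  have hℓm : (ℓ : ℝ) * m ≤ n := by exact_mod_cast (by omega : ℓ * m ≤ n)
  have hcard : (#(Icc (2 * ℓ * m) n) : ℝ) ≤ 2 * ℓ := by
    rw [Nat.card_Icc, mul_assoc]; exact_mod_cast (by omega : n + 1 - 2 * (ℓ * m) ≤ 2 * ℓ)
  have hS := abs_sum_range_sum_range_pairedSummand_le ℓ m hB
  have hT := abs_sum_Icc_mul_sin_mul_cos_le (2 * ℓ * m) n x
  have hν₁ : (1 : ℝ) ≤ n ^ ν := one_le_rpow hn₁ hν.1.le
  rw [rpow_add (by positivity), rpow_one]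
  calc _ ≤ |∑ j ∈ range m, ∑ k ∈ range ℓ, pairedSummand ℓ j k x|
        + |∑ j ∈ Icc (2 * ℓ * m) n, (j : ℝ) * sin (j * x) * cos (j * x)| := by
        rw [← abs_neg (∑ j ∈ range m, _)]; exact abs_sub _ _
    _ ≤ ℓ ^ 2 * ((8 * m + 6) * n ^ ν + m) + 2 * ℓ * n := by
        gcongr
        exact hT.trans (by gcongr)
    _ ≤ 17 * ℓ ^ 2 * (n * n ^ ν) := by
        have hℓℓ : (ℓ : ℝ) ≤ ℓ ^ 2 := by nlinarith
        have hnnν : (n : ℝ) ≤ n * n ^ ν := le_mul_of_one_le_right (by positivity) hν₁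
        have hnν : (n : ℝ) ^ ν ≤ n * n ^ ν := le_mul_of_one_le_left (by positivity) hn₁
        have hℓmν : (ℓ : ℝ) * m * n ^ ν ≤ n * n ^ ν := by gcongr
        have hP : (0 : ℝ) ≤ n * n ^ ν := by positivity
        nlinarith
end

section
/- The limit lim_{n→∞} ∫_{n^{−1/6}}^{n^{1/6}} cos(x/√n) / (n sin²(x/(4√n)) + cos²(x/√n)) dx = 2π holds, where the integral is over the real interval [n^{−1/6}, n^{1/6}]. -/
/-!
Put `s = √n`, so the integrand is `K s x = cos (x/s) / (s² sin² (x/4s) + cos² (x/s))`.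
As `s → ∞`, `s sin (x/4s) → x/4` and `cos (x/s) → 1`, so `K s x → (1 + (x/4)²)⁻¹`, whose
integral over `(0, ∞)` is `4 · π/2 = 2π`. For `0 ≤ x ≤ s/2`, Jordan's inequality
`sin t ≥ (2/π) t` gives the integrable majorant `K s x ≤ 2 (1 + (x/8)²)⁻¹`; since
`n^(1/6) ≤ √n / 2` for large `n` and the endpoints `n^(∓1/6)` exhaust `(0, ∞)`,
dominated convergence yields the limit.
-/

open Real Filter MeasureTheory Set Topology

theorem integral_Ioi_zero_inv_one_add_div_sq {c : ℝ} (hc : 0 < c) :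
    ∫ x in Ioi (0 : ℝ), (1 + (x / c) ^ 2)⁻¹ = c * (π / 2) := by
  have h := integral_comp_mul_left_Ioi (fun x : ℝ => (1 + x ^ 2)⁻¹) 0 (inv_pos.mpr hc)
  simp only [mul_zero, integral_Ioi_inv_one_add_sq, arctan_zero, sub_zero, inv_inv,
    smul_eq_mul] at h
  simpa only [div_eq_inv_mul] using h

theorem sin_eq_mul_sinc (u : ℝ) : sin u = u * sinc u := by
  rcases eq_or_ne u 0 with rfl | hu
  · simp
  · rw [sinc_of_ne_zero hu, mul_div_cancel₀ _ hu]

theorem tendsto_mul_sin_div_atTop (x : ℝ) :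
    Tendsto (fun s : ℝ => s * sin (x / s)) atTop (𝓝 x) := by
  have hsinc : Tendsto (fun s : ℝ => x * sinc (x / s)) atTop (𝓝 (x * sinc 0)) :=
    ((continuous_sinc.tendsto 0).comp (tendsto_const_nhds.div_atTop tendsto_id)).const_mul x
  rw [sinc_zero, mul_one] at hsinc
  refine hsinc.congr' ?_
  filter_upwards [eventually_ne_atTop 0] with s hs
  rw [sin_eq_mul_sinc, ← mul_assoc, mul_div_cancel₀ _ hs]

noncomputable def sinCosKernel (s x : ℝ) : ℝ :=
  cos (x / s) / (s ^ 2 * sin (x / (4 * s)) ^ 2 + cos (x / s) ^ 2)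

theorem tendsto_sinCosKernel_atTop (x : ℝ) :
    Tendsto (fun s => sinCosKernel s x) atTop (𝓝 (1 + (x / 4) ^ 2)⁻¹) := by
  have hcos : Tendsto (fun s : ℝ => cos (x / s)) atTop (𝓝 1) := by
    simpa only [div_zero, cos_zero, Function.comp_def, id] using
      (continuous_cos.tendsto (0 : ℝ)).comp (tendsto_const_nhds.div_atTop tendsto_id)
  have hsin : Tendsto (fun s : ℝ => s ^ 2 * sin (x / (4 * s)) ^ 2) atTop (𝓝 ((x / 4) ^ 2)) := by
    refine ((tendsto_mul_sin_div_atTop (x / 4)).pow 2).congr fun s => ?_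
    rw [div_div, mul_comm 4 s, mul_pow]
  have h := hcos.div (hsin.add (hcos.pow 2)) (by positivity)
  rw [one_pow, one_div, add_comm ((x / 4) ^ 2)] at h
  exact h

theorem abs_sinCosKernel_le {s x : ℝ} (hs : 0 < s) (hx : 0 ≤ x) (hxs : x ≤ s / 2) :
    |sinCosKernel s x| ≤ 2 * (1 + (x / 8) ^ 2)⁻¹ := by
  have hu : x / s ≤ 1 / 2 := by rwa [div_le_iff₀ hs, one_div_mul_eq_div]
  have hu0 : 0 ≤ x / s := div_nonneg hx hs.le
  have hsin : (x / 8) ^ 2 ≤ s ^ 2 * sin (x / (4 * s)) ^ 2 := by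
    have ht0 : 0 ≤ x / (4 * s) := by positivity
    have hjordan := mul_le_sin ht0 (by
      rw [mul_comm, ← div_div]; linarith [pi_gt_three])
    have h_lin : x / 8 ≤ s * sin (x / (4 * s)) := by
      have h2pi : 1 / 2 ≤ 2 / π := by rw [div_le_div_iff₀ two_pos pi_pos]; linarith [pi_lt_four]
      calc x / 8 = s * (1 / 2 * (x / (4 * s))) := by field_simp; ring
        _ ≤ s * (2 / π * (x / (4 * s))) := by gcongr
        _ ≤ s * sin (x / (4 * s)) := by gcongr
    calc (x / 8) ^ 2 ≤ (s * sin (x / (4 * s))) ^ 2 := by gcongr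
      _ = _ := mul_pow _ _ _
  have hcos : 1 / 2 ≤ cos (x / s) ^ 2 := by
    have h7 : 7 / 8 ≤ cos (x / s) := by nlinarith [one_sub_sq_div_two_le_cos (x := x / s)]
    nlinarith
  have hden : (1 + (x / 8) ^ 2) / 2 ≤ s ^ 2 * sin (x / (4 * s)) ^ 2 + cos (x / s) ^ 2 := by
    nlinarith [sq_nonneg (x / 8)]
  calc |sinCosKernel s x| ≤ 1 / (s ^ 2 * sin (x / (4 * s)) ^ 2 + cos (x / s) ^ 2) := by
        rw [sinCosKernel, abs_div, abs_of_pos (lt_of_lt_of_le (by positivity) hden)]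
        gcongr
        exact abs_cos_le_one _
    _ ≤ 1 / ((1 + (x / 8) ^ 2) / 2) := by gcongr
    _ = 2 * (1 + (x / 8) ^ 2)⁻¹ := by field_simp

theorem sinCosKernel_sqrt {t : ℝ} (ht : 0 ≤ t) (x : ℝ) :
    sinCosKernel (√t) x = cos (x / √t) / (t * sin (x / (4 * √t)) ^ 2 + cos (x / √t) ^ 2) := by
  rw [sinCosKernel, sq_sqrt ht]

theorem tendsto_intervalIntegral_of_dominated_Ioi {ι : Type*} {l : Filter ι}
    [l.IsCountablyGenerated] {F : ι → ℝ → ℝ} {g B : ℝ → ℝ} {a b : ι → ℝ} {c : ℝ}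
    (ha : Tendsto a l (𝓝 c)) (hca : ∀ᶠ i in l, c ≤ a i) (hb : Tendsto b l atTop)
    (hF_meas : ∀ᶠ i in l, AEStronglyMeasurable (F i) (volume.restrict (Ioi c)))
    (h_bound : ∀ᶠ i in l, ∀ x ∈ Ioc (a i) (b i), |F i x| ≤ B x)
    (hB : IntegrableOn B (Ioi c))
    (h_lim : ∀ x > c, Tendsto (fun i => F i x) l (𝓝 (g x))) :
    Tendsto (fun i => ∫ x in a i..b i, F i x) l (𝓝 (∫ x in Ioi c, g x)) := by
  have h_eq : ∀ᶠ i in l,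
      ∫ x in Ioi c, (Ioc (a i) (b i)).indicator (F i) x = ∫ x in a i..b i, F i x := by
    filter_upwards [hca, ha.eventually (eventually_lt_nhds (lt_add_one c)),
      hb.eventually_ge_atTop (c + 1)] with i hci hai hbi
    rw [intervalIntegral.integral_of_le (by linarith), integral_indicator measurableSet_Ioc,
      Measure.restrict_restrict measurableSet_Ioc,
      inter_eq_left.mpr (Ioc_subset_Ioi_self.trans (Ioi_subset_Ioi hci))]
  refine (tendsto_integral_filter_of_dominated_convergence (fun x => |B x|) ?_ ?_ hB.abs ?_).congr'
    h_eq
  · filter_upwards [hF_meas] with i hi using hi.indicator measurableSet_Ioc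
  · filter_upwards [h_bound] with i hi
    refine ae_of_all _ fun x => ?_
    by_cases hx : x ∈ Ioc (a i) (b i)
    · rw [indicator_of_mem hx, norm_eq_abs]
      exact (hi x hx).trans (le_abs_self _)
    · rw [indicator_of_notMem hx, norm_zero]
      exact abs_nonneg _
  · rw [ae_restrict_iff' measurableSet_Ioi]
    refine ae_of_all _ fun x (hx : c < x) => (h_lim x hx).congr' ?_
    filter_upwards [ha.eventually (eventually_lt_nhds hx), hb.eventually_ge_atTop x] with i h1 h2
    exact (indicator_of_mem (show x ∈ Ioc (a i) (b i) from ⟨h1, h2⟩) _).symm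

theorem eventually_natCast_rpow_le_sqrt_div_two :
    ∀ᶠ n : ℕ in atTop, (n : ℝ) ^ ((1 : ℝ) / 6) ≤ √n / 2 := by
  filter_upwards [((tendsto_rpow_atTop (by norm_num : (0 : ℝ) < 1 / 3)).comp
    tendsto_natCast_atTop_atTop).eventually_ge_atTop 2] with n hn
  have h0 : 0 ≤ (n : ℝ) ^ ((1 : ℝ) / 6) := rpow_nonneg n.cast_nonneg _
  rw [sqrt_eq_rpow, show (1 / 2 : ℝ) = 1 / 6 + 1 / 3 by norm_num,
    rpow_add' n.cast_nonneg (by norm_num)]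
  simp only [Function.comp_apply] at hn
  nlinarith

/-- `lim_{n→∞} ∫_{n^(-1/6)}^{n^(1/6)} cos(x/√n) /
(n sin²(x/(4√n)) + cos²(x/√n)) dx = 2π`. -/
theorem limit_integral_two_pi :
    Filter.Tendsto (fun n : ℕ =>
      ∫ x in ((n : ℝ) ^ (-(1 : ℝ) / 6))..((n : ℝ) ^ ((1 : ℝ) / 6)),
        Real.cos (x / Real.sqrt n) /
          ((n : ℝ) * Real.sin (x / (4 * Real.sqrt n)) ^ 2 + Real.cos (x / Real.sqrt n) ^ 2))
      Filter.atTop (nhds (2 * π)) := by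
  have h_lower : Tendsto (fun n : ℕ => (n : ℝ) ^ (-(1 : ℝ) / 6)) atTop (𝓝 0) := by
    simpa only [neg_div, Function.comp_def] using
      (tendsto_rpow_neg_atTop (by norm_num : (0 : ℝ) < 1 / 6)).comp tendsto_natCast_atTop_atTop
  have h_upper : Tendsto (fun n : ℕ => (n : ℝ) ^ ((1 : ℝ) / 6)) atTop atTop :=
    (tendsto_rpow_atTop (by norm_num)).comp tendsto_natCast_atTop_atTop
  have h_dom : ∀ᶠ n : ℕ in atTop, ∀ x ∈ Ioc ((n : ℝ) ^ (-(1 : ℝ) / 6)) ((n : ℝ) ^ ((1 : ℝ) / 6)),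
      |sinCosKernel √n x| ≤ 2 * (1 + (x / 8) ^ 2)⁻¹ := by
    filter_upwards [eventually_natCast_rpow_le_sqrt_div_two] with n hn x hx
    have hx0 : 0 < x := (rpow_nonneg n.cast_nonneg _).trans_lt hx.1
    exact abs_sinCosKernel_le (by linarith [hx.2]) hx0.le (hx.2.trans hn)
  have h_value : ∫ x in Ioi (0 : ℝ), (1 + (x / 4) ^ 2)⁻¹ = 2 * π := by
    rw [integral_Ioi_zero_inv_one_add_div_sq four_pos]
    ring
  simp only [← sinCosKernel_sqrt (Nat.cast_nonneg _), ← h_value]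
  exact tendsto_intervalIntegral_of_dominated_Ioi h_lower
    (.of_forall fun n => rpow_nonneg n.cast_nonneg _) h_upper
    (.of_forall fun n => (by unfold sinCosKernel; fun_prop : Measurable _).aestronglyMeasurable)
    h_dom ((integrable_inv_one_add_sq.comp_div (by norm_num)).const_mul 2).integrableOn
    fun x _ => (tendsto_sinCosKernel_atTop x).comp
      (tendsto_sqrt_atTop.comp tendsto_natCast_atTop_atTop)
end

section
/- There exist C > 0 and N ∈ ℕ such that for all n ≥ N, |∫_{n^{−1/6}}^{n^{1/6}} cos(x/√n) / (n sin²(x/(4√n)) + cos²(x/√n)) dx − 2π| ≤ C n^{−1/6}. -/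
open Real intervalIntegral

/-!
On `|x| ≤ √n / 16` the integrand is `1 / (1 + (x / 4) ^ 2) + O(1 / n)`, from `sin y = y + O(y³)`
and `cos y = 1 + O(y²)` at `y = x / (4 √n)`. With `b = n ^ (1/6)`, the Lorentzian integrates over
`[b⁻¹, b]` to `2π - 4 arctan (4 / b) - 4 arctan (1 / (4 b)) = 2π + O(1 / b)`, while the pointwise
error contributes only `O(b / n)`.
-/

noncomputable def twoPiIntegrand (m x : ℝ) : ℝ :=
  cos (x / √m) / (m * sin (x / (4 * √m)) ^ 2 + cos (x / √m) ^ 2)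

lemma Real.arctan_le_self {x : ℝ} (hx : 0 ≤ x) : arctan x ≤ x := by
  simpa only [tan_arctan] using le_tan (arctan_nonneg.2 hx) (arctan_lt_pi_div_two x)

lemma twoPiIntegrand_denom_pos {m : ℝ} (hm : 0 < m) (x : ℝ) :
    0 < m * sin (x / (4 * √m)) ^ 2 + cos (x / √m) ^ 2 := by
  -- `sin θ = 0` forces `cos (4 θ) = 1`, so the two squares never vanish together.
  set θ := x / (4 * √m)
  have hθ : x / √m = 4 * θ := by rw [mul_div_assoc', mul_div_mul_left x _ four_ne_zero]
  have hcos : cos (4 * θ) = 1 - 8 * sin θ ^ 2 * cos θ ^ 2 := by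
    rw [show 4 * θ = 2 * (2 * θ) by ring, cos_two_mul, cos_sq', sin_two_mul]; ring
  rcases (sq_nonneg (sin θ)).lt_or_eq with hs | hs
  · positivity
  · rw [hθ, hcos, ← hs]; norm_num

lemma continuous_twoPiIntegrand {m : ℝ} (hm : 0 < m) : Continuous (twoPiIntegrand m) :=
  Continuous.div (by fun_prop) (by fun_prop) fun x ↦ (twoPiIntegrand_denom_pos hm x).ne'

lemma integral_one_div_one_add_div_four_sq (a b : ℝ) :
    ∫ x in a..b, 1 / (1 + (x / 4) ^ 2) = 4 * (arctan (b / 4) - arctan (a / 4)) := by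
  rw [integral_comp_div (fun y ↦ 1 / (1 + y ^ 2)) four_ne_zero, integral_one_div_one_add_sq,
    smul_eq_mul]

lemma abs_integral_one_div_one_add_div_four_sq_sub_two_pi_le {b : ℝ} (hb : 0 < b) :
    |(∫ x in b⁻¹..b, 1 / (1 + (x / 4) ^ 2)) - 2 * π| ≤ 17 / b := by
  have hcompl : arctan (b / 4) = π / 2 - arctan (4 / b) := by
    rw [← arctan_inv_of_pos (by positivity), inv_div]
  have h₁ : arctan (4 / b) ≤ 4 / b := arctan_le_self (by positivity)
  have h₂ : arctan (b⁻¹ / 4) ≤ b⁻¹ / 4 := arctan_le_self (by positivity)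
  have h₃ : 0 ≤ arctan (4 / b) := arctan_nonneg.2 (by positivity)
  have h₄ : 0 ≤ arctan (b⁻¹ / 4) := arctan_nonneg.2 (by positivity)
  have h₁₇ : 17 / b = 4 * (4 / b) + 4 * (b⁻¹ / 4) := by field_simp; norm_num
  rw [integral_one_div_one_add_div_four_sq, hcompl,
    show 4 * (π / 2 - arctan (4 / b) - arctan (b⁻¹ / 4)) - 2 * π
      = -(4 * arctan (4 / b) + 4 * arctan (b⁻¹ / 4)) by ring,
    abs_neg, abs_of_nonneg (by positivity)]
  linarith

lemma Real.sq_sub_sin_sq_le (t : ℝ) : t ^ 2 - sin t ^ 2 ≤ t ^ 4 / 3 :=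
  calc t ^ 2 - sin t ^ 2 = (t - sin t) * (t + sin t) := by ring
    _ ≤ |t - sin t| * |t + sin t| := by rw [← abs_mul]; exact le_abs_self _
    _ ≤ |t| ^ 3 / 6 * (2 * |t|) := by
      gcongr
      · exact abs_sub_sin_le t
      · linarith [abs_add_le t (sin t), abs_sin_le_abs (x := t)]
    _ = t ^ 4 / 3 := by rw [show t ^ 4 = (|t| ^ 2) ^ 2 by rw [sq_abs]; ring]; ring

lemma Real.sq_div_four_le_sin_sq {t : ℝ} (ht : |t| ≤ 1) : t ^ 2 / 4 ≤ sin t ^ 2 := by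
  have hcube : |t| ^ 3 ≤ |t| := pow_le_of_le_one (abs_nonneg t) ht three_ne_zero
  have : |t / 2| ≤ |sin t| := by
    rw [abs_div, abs_two]
    linarith [abs_sub_abs_le_abs_sub t (sin t), abs_sub_sin_le t, abs_nonneg t]
  calc t ^ 2 / 4 = (t / 2) ^ 2 := by ring
    _ ≤ sin t ^ 2 := sq_le_sq.2 this

lemma abs_cos_div_sub_one_div_le {m t : ℝ} (hm : 0 < m) (ht : |t| ≤ 1 / 64) :
    |cos (4 * t) / (m * sin t ^ 2 + cos (4 * t) ^ 2) - 1 / (1 + m * t ^ 2)| ≤ 100 / m := by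
  have ht₂ : t ^ 2 ≤ (1 / 64) ^ 2 := by
    rw [← sq_abs]; exact pow_le_pow_left₀ (abs_nonneg t) ht 2
  set c := cos (4 * t)
  set s := sin t
  have hc₁ : 1 - c ≤ 8 * t ^ 2 := by linarith [one_sub_sq_div_two_le_cos (x := 4 * t)]
  have hc₂ : c ≤ 1 := cos_le_one _
  have hc₃ : 1 - c ^ 2 ≤ 16 * t ^ 2 := by
    linarith [sin_sq_le_sq (x := 4 * t), sin_sq_add_cos_sq (4 * t)]
  have hc₄ : 1 / 4 ≤ c ^ 2 := by
    have hc : 1 / 2 ≤ c := by linarith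
    calc (1 : ℝ) / 4 = (1 / 2) ^ 2 := by norm_num
      _ ≤ c ^ 2 := pow_le_pow_left₀ (by norm_num) hc 2
  have hs₁ : m * s ^ 2 ≤ m * t ^ 2 := mul_le_mul_of_nonneg_left sin_sq_le_sq hm.le
  have hs₂ : m * t ^ 2 - m * s ^ 2 ≤ m * t ^ 4 / 3 := by
    linarith [mul_le_mul_of_nonneg_left (sq_sub_sin_sq_le t) hm.le]
  have hs₃ : m * t ^ 2 / 4 ≤ m * s ^ 2 := by
    linarith [mul_le_mul_of_nonneg_left (sq_div_four_le_sin_sq (ht.trans (by norm_num))) hm.le]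
  set D₁ := m * s ^ 2 + c ^ 2
  set D₂ := 1 + m * t ^ 2
  have hw : m * t ^ 2 = D₂ - 1 := by ring
  have hD₂ : 1 ≤ D₂ := by linarith [mul_nonneg hm.le (sq_nonneg t)]
  have hD : D₂ / 4 ≤ D₁ := by linarith
  have hD₁ : 0 < D₁ := by linarith
  have hD₁₂ : 0 < D₁ * D₂ := mul_pos hD₁ (by linarith)
  have hN : |c * D₂ - D₁ * 1| ≤ 8 * t ^ 2 * D₂ + (m * t ^ 4 / 3 + 16 * t ^ 2) := by
    have h₁ : (1 - c) * D₂ ≤ 8 * t ^ 2 * D₂ := mul_le_mul_of_nonneg_right hc₁ (by linarith)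
    have h₂ : 0 ≤ (1 - c) * D₂ := mul_nonneg (by linarith) (by linarith)
    have hsplit : c * D₂ - D₁ * 1 = -((1 - c) * D₂) + (m * t ^ 2 - m * s ^ 2) + (1 - c ^ 2) := by
      ring
    rw [abs_le, hsplit]; constructor <;> linarith [cos_sq_le_one (4 * t)]
  rw [div_sub_div _ _ hD₁.ne' (by linarith), abs_div, abs_of_pos hD₁₂, div_le_div_iff₀ hD₁₂ hm]
  calc |c * D₂ - D₁ * 1| * m
      ≤ (8 * t ^ 2 * D₂ + (m * t ^ 4 / 3 + 16 * t ^ 2)) * m := by gcongr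
    _ = 8 * (D₂ - 1) * D₂ + (D₂ - 1) ^ 2 / 3 + 16 * (D₂ - 1) := by rw [← hw]; ring
    _ ≤ 25 * D₂ ^ 2 := by nlinarith
    _ ≤ 100 * (D₁ * D₂) := by linarith [mul_le_mul_of_nonneg_right hD (by linarith : 0 ≤ D₂)]

lemma abs_twoPiIntegrand_sub_le {m x : ℝ} (hm : 0 < m) (hx : |x| ≤ √m / 16) :
    |twoPiIntegrand m x - 1 / (1 + (x / 4) ^ 2)| ≤ 100 / m := by
  have hr : 0 < 4 * √m := mul_pos four_pos (sqrt_pos.2 hm)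
  set t := x / (4 * √m) with ht_def
  have hut : x / √m = 4 * t := by rw [ht_def, mul_div_assoc', mul_div_mul_left x _ four_ne_zero]
  have hmt : (x / 4) ^ 2 = m * t ^ 2 := by
    rw [ht_def, div_pow x (4 * √m), mul_pow, sq_sqrt hm.le]; field_simp
  have ht : |t| ≤ 1 / 64 := by
    rw [ht_def, abs_div, abs_of_pos hr, div_le_iff₀ hr]; linarith
  unfold twoPiIntegrand
  rw [hut, ← ht_def, hmt]
  exact abs_cos_div_sub_one_div_le hm ht

lemma abs_integral_twoPiIntegrand_sub_two_pi_le {m b : ℝ} (hm : 0 < m) (hb : 1 ≤ b)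
    (hbm : b ≤ √m / 16) :
    |(∫ x in b⁻¹..b, twoPiIntegrand m x) - 2 * π| ≤ 100 * b / m + 17 / b := by
  have hb₀ : 0 < b := one_pos.trans_le hb
  have hab : b⁻¹ ≤ b := (inv_le_one_of_one_le₀ hb).trans hb
  have hg : Continuous fun x : ℝ ↦ 1 / (1 + (x / 4) ^ 2) :=
    continuous_const.div (by fun_prop) fun x ↦ by positivity
  have hcompare : |(∫ x in b⁻¹..b, twoPiIntegrand m x) - ∫ x in b⁻¹..b, 1 / (1 + (x / 4) ^ 2)|
      ≤ 100 * b / m := by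
    rw [← integral_sub ((continuous_twoPiIntegrand hm).intervalIntegrable _ _)
      (hg.intervalIntegrable _ _)]
    calc ‖∫ x in b⁻¹..b, twoPiIntegrand m x - 1 / (1 + (x / 4) ^ 2)‖ ≤ 100 / m * |b - b⁻¹| := by
          refine norm_integral_le_of_norm_le_const fun x hx ↦ ?_
          rw [Set.uIoc_of_le hab] at hx
          refine abs_twoPiIntegrand_sub_le hm ?_
          rw [abs_of_pos ((inv_pos.2 hb₀).trans hx.1)]
          exact hx.2.trans hbm
      _ ≤ 100 * b / m := by
          rw [abs_of_nonneg (sub_nonneg.2 hab), div_mul_eq_mul_div]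
          gcongr; linarith [inv_pos.2 hb₀]
  calc _ ≤ _ := abs_sub_le _ (∫ x in b⁻¹..b, 1 / (1 + (x / 4) ^ 2)) _
    _ ≤ _ := add_le_add hcompare (abs_integral_one_div_one_add_div_four_sq_sub_two_pi_le hb₀)

/-- quantitative estimate `|∫_{n^(-1/6)}^{n^(1/6)} cos(x/√n) /
(n sin²(x/(4√n)) + cos²(x/√n)) dx - 2π| ≤ C n^(-1/6)` for all large `n`. -/
theorem integral_two_pi_rate :
    ∃ C > 0, ∃ N : ℕ, ∀ n ≥ N,
      |(∫ x in ((n : ℝ) ^ (-(1 : ℝ) / 6))..((n : ℝ) ^ ((1 : ℝ) / 6)),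
          Real.cos (x / Real.sqrt n) /
            ((n : ℝ) * Real.sin (x / (4 * Real.sqrt n)) ^ 2 +
              Real.cos (x / Real.sqrt n) ^ 2)) - 2 * π|
        ≤ C * (n : ℝ) ^ (-(1 : ℝ) / 6) := by
  refine ⟨117, by norm_num, 4096, fun n hn ↦ ?_⟩
  set b := (n : ℝ) ^ ((1 : ℝ) / 6) with hb_def
  have hb₀ : 0 ≤ b := by positivity
  have hb₆ : b ^ 6 = n := by
    rw [hb_def, one_div, ← Nat.cast_ofNat, rpow_inv_natCast_pow (Nat.cast_nonneg n) (by norm_num)]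
  have hb₄ : 4 ≤ b := by
    refine le_of_pow_le_pow_left₀ (n := 6) (by norm_num) hb₀ ?_
    rw [hb₆]; exact_mod_cast (show 4 ^ 6 ≤ n by omega)
  have hsqrt : √n = b ^ 3 := by
    rw [← hb₆, show b ^ 6 = (b ^ 3) ^ 2 by ring, sqrt_sq (by positivity)]
  have hinv : (n : ℝ) ^ (-(1 : ℝ) / 6) = b⁻¹ := by
    rw [neg_div, rpow_neg (Nat.cast_nonneg n)]
  have hbm : b ≤ √n / 16 := by
    rw [hsqrt]; nlinarith [mul_self_le_mul_self (by norm_num) hb₄]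
  rw [hinv]
  calc _ ≤ 100 * b / n + 17 / b :=
        abs_integral_twoPiIntegrand_sub_two_pi_le (by positivity) (by linarith) hbm
    _ ≤ 117 * b⁻¹ := by
        rw [← hb₆]; field_simp; nlinarith [one_le_pow₀ (n := 4) (by linarith : 1 ≤ b)]
end
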